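/- arXiv:1003.2544 — 9 statements merged into one kernel-verified Lean document; each statement's English description precedes it below -/
import Mathlib

section
/- The polynomial Â_{n,j}(t), defined as the descent generating function over permutations w ∈ S_n with w(1) = j or w(1) = n+1-j, has symmetric coefficients: the coefficient of t^i equals the coefficient of t^{n-1-i}. -/
open scoped Classical

/-- The number of descents of a permutation of `Fin n` (positions are 0-based:
`i` is a descent if `w i > w (i+1)`). -/
def des {n : ℕ} (w : Equiv.Perm (Fin n)) : ℕ :=
  (Finset.univ.filter fun i : Fin n => ∃ h : (i : ℕ) + 1 < n, w ⟨(i : ℕ) + 1, h⟩ < w i).card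

/-- `A n i j` = number of permutations `w` of `{1,…,n}` with `w(1) = j` (1-based)
and exactly `i` descents. -/
def A (n i j : ℕ) : ℕ :=
  (Finset.univ.filter fun w : Equiv.Perm (Fin n) =>
    (∀ x : Fin n, (x : ℕ) = 0 → (w x : ℕ) + 1 = j) ∧ des w = i).card

/-- The Eulerian number: permutations of `{1,…,n}` with exactly `i` descents. -/
def Eul (n i : ℕ) : ℕ :=
  (Finset.univ.filter fun w : Equiv.Perm (Fin n) => des w = i).card

open Polynomial

/-- Restricted Eulerian polynomial `A_{n,j}(t) = Σ_{w(1)=j} t^{d(w)}`. -/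
noncomputable def Apoly (n j : ℕ) : Polynomial ℤ :=
  ∑ w ∈ (Finset.univ.filter fun w : Equiv.Perm (Fin n) =>
      ∀ x : Fin n, (x : ℕ) = 0 → (w x : ℕ) + 1 = j), X ^ des w

/-- Symmetric restricted Eulerian polynomial
`Â_{n,j}(t) = Σ_{w(1) ∈ {j, n+1-j}} t^{d(w)}`. -/
noncomputable def AhatPoly (n j : ℕ) : Polynomial ℤ :=
  ∑ w ∈ (Finset.univ.filter fun w : Equiv.Perm (Fin n) =>
      ∀ x : Fin n, (x : ℕ) = 0 → ((w x : ℕ) + 1 = j ∨ (w x : ℕ) + 1 = n + 1 - j)),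
    X ^ des w

/-- `Â'_{n,j}(t) = t·A_{n,j}(t) + A_{n,n+1-j}(t)`. -/
noncomputable def AhatPoly' (n j : ℕ) : Polynomial ℤ :=
  X * Apoly n j + Apoly n (n + 1 - j)

/-!
Complementing the values, `w ↦ rev ∘ w` (that is, `w(k) ↦ n + 1 - w(k)`), turns every descent
into an ascent and vice versa, so `d(rev ∘ w) = n - 1 - d(w)`. It also swaps the two allowed
first letters `j` and `n + 1 - j`, hence permutes the index set of `Â_{n,j}`, which makes the
coefficient sequence palindromic.
-/

open Finset

lemma card_filter_val_add_one_lt (n : ℕ) : #{i : Fin n | (i : ℕ) + 1 < n} = n - 1 := by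
  simp_rw [← Nat.lt_sub_iff_add_lt, Fin.card_filter_val_lt, min_eq_right (Nat.sub_le n 1)]

lemma des_add_des_trans_revPerm {n : ℕ} (w : Equiv.Perm (Fin n)) :
    des w + des (w.trans Fin.revPerm) = n - 1 := by
  rw [des, des, ← card_union_of_disjoint, ← card_filter_val_add_one_lt n]
  · congr 1
    ext i
    simp only [mem_union, mem_filter, mem_univ, true_and, Equiv.trans_apply, Fin.revPerm_apply,
      Fin.rev_lt_rev]
    constructor
    · rintro (⟨h, -⟩ | ⟨h, -⟩) <;> exact h
    · intro h
      refine (lt_or_gt_of_ne fun he => ?_).imp (⟨h, ·⟩) (⟨h, ·⟩)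
      simpa using congrArg Fin.val (w.injective he)
  · simp only [disjoint_left, mem_filter, mem_univ, true_and, Equiv.trans_apply,
      Fin.revPerm_apply, Fin.rev_lt_rev]
    rintro i ⟨_, hlt⟩ ⟨_, hgt⟩
    exact lt_asymm hlt hgt

lemma coeff_sum_X_pow_des {R : Type*} [Semiring R] {n : ℕ} (S : Finset (Equiv.Perm (Fin n)))
    (k : ℕ) : (∑ w ∈ S, (X : R[X]) ^ des w).coeff k = #{w ∈ S | des w = k} := by
  simp only [finsetSum_coeff, coeff_X_pow, sum_boole, eq_comm]

theorem coeff_sum_X_pow_des_eq_coeff_sub {R : Type*} [Semiring R] {n : ℕ}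
    (S : Finset (Equiv.Perm (Fin n))) (hS : ∀ w ∈ S, w.trans Fin.revPerm ∈ S) {i : ℕ}
    (hi : i ≤ n - 1) :
    (∑ w ∈ S, (X : R[X]) ^ des w).coeff i = (∑ w ∈ S, (X : R[X]) ^ des w).coeff (n - 1 - i) := by
  have hrev (w : Equiv.Perm (Fin n)) : (w.trans Fin.revPerm).trans Fin.revPerm = w := by
    ext; simp
  rw [coeff_sum_X_pow_des, coeff_sum_X_pow_des]
  congr 1
  refine card_nbij' (·.trans Fin.revPerm) (·.trans Fin.revPerm) ?_ ?_ (fun w _ => hrev w)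
    (fun w _ => hrev w)
  all_goals
    intro w hw
    simp only [coe_filter, Set.mem_ofPred_eq] at hw ⊢
    have := des_add_des_trans_revPerm w
    exact ⟨hS w hw.1, by omega⟩

theorem stmt5_general (n j : ℕ) :
    ∀ i ≤ n - 1, (AhatPoly n j).coeff i = (AhatPoly n j).coeff (n - 1 - i) := by
  intro i hi
  refine coeff_sum_X_pow_des_eq_coeff_sub _ (fun w hw => ?_) hi
  simp only [mem_filter, mem_univ, true_and, Equiv.trans_apply, Fin.revPerm_apply,
    Fin.val_rev] at hw ⊢
  intro x hx
  have := hw x hx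
  omega

theorem stmt5 (n j : ℕ) (hn : 1 ≤ n) (hj1 : 1 ≤ j) (hjn : j ≤ n) :
    ∀ i ≤ n - 1, (AhatPoly n j).coeff i = (AhatPoly n j).coeff (n - 1 - i) :=
  stmt5_general n j
end

section
/- For j < (n+1)/2, the polynomial Â'_{n,j}(t) := t·A_{n,j}(t) + A_{n,n+1-j}(t) has symmetric coefficients of degree n: the coefficient of t^i equals the coefficient of t^{n-i} for all 0 ≤ i ≤ n. -/
open scoped Classical

open Polynomial

lemma des_rev {n : ℕ} (hn : 1 ≤ n) (w : Equiv.Perm (Fin n)) :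
    des (Fin.revPerm * w) + des w = n - 1 := by
  classical
  set s : Finset (Fin n) := Finset.univ.filter (fun i => (i : ℕ) + 1 < n) with hs
  have hcard : s.card = n - 1 := by
    obtain ⟨m, rfl⟩ : ∃ m, n = m + 1 := ⟨n - 1, by omega⟩
    have : s = Finset.univ.erase (Fin.last m) := by
      ext i
      simp [hs, Finset.mem_erase, Fin.ext_iff, Fin.val_last]
      omega
    rw [this, Finset.card_erase_of_mem (Finset.mem_univ _), Finset.card_univ]
    simp
  have h1 : des w = (s.filter (fun i : Fin n => ∃ h : (i : ℕ) + 1 < n, w ⟨(i : ℕ) + 1, h⟩ < w i)).card := by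
    unfold des
    congr 1
    rw [hs, Finset.filter_filter]
    apply Finset.filter_congr
    intro i _
    constructor
    · rintro ⟨h, hlt⟩; exact ⟨h, h, hlt⟩
    · rintro ⟨_, h, hlt⟩; exact ⟨h, hlt⟩
  have h2 : des (Fin.revPerm * w)
      = (s.filter (fun i : Fin n => ¬ ∃ h : (i : ℕ) + 1 < n, w ⟨(i : ℕ) + 1, h⟩ < w i)).card := by
    unfold des
    congr 1
    rw [hs, Finset.filter_filter]
    ext i
    simp only [Finset.mem_filter, Finset.mem_univ, true_and]
    constructor
    · rintro ⟨h, hlt⟩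
      refine ⟨h, ?_⟩
      rintro ⟨h', hlt'⟩
      simp only [Equiv.Perm.mul_apply, Fin.revPerm_apply, Fin.rev_lt_rev] at hlt
      exact absurd hlt (not_lt.mpr hlt'.le)
    · rintro ⟨h, hnot⟩
      refine ⟨h, ?_⟩
      simp only [Equiv.Perm.mul_apply, Fin.revPerm_apply, Fin.rev_lt_rev]
      rcases lt_trichotomy (w ⟨(i : ℕ) + 1, h⟩) (w i) with hlt | heq | hgt
      · exact absurd ⟨h, hlt⟩ hnot
      · exfalso
        have := w.injective heq
        have : ((i : ℕ) + 1 : ℕ) = (i : ℕ) := congrArg Fin.val this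
        omega
      · exact hgt
  rw [h1, h2, ← hcard]
  rw [add_comm]
  exact Finset.card_filter_add_card_filter_not _

lemma coeff_Apoly (n j i : ℕ) : (Apoly n j).coeff i = (A n i j : ℤ) := by
  classical
  unfold Apoly A
  rw [Polynomial.finset_sum_coeff]
  simp only [Polynomial.coeff_X_pow]
  simp only [eq_comm (a := i)]
  rw [Finset.sum_boole, Finset.filter_filter]

lemma A_big (n i j : ℕ) (hn : 1 ≤ n) (hi : n ≤ i) : A n i j = 0 := by
  unfold A
  rw [Finset.card_eq_zero, Finset.filter_eq_empty_iff]
  rintro w - ⟨-, hd⟩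
  have := des_rev hn w
  omega

lemma A_symm (n i j : ℕ) (hn : 1 ≤ n) (hj1 : 1 ≤ j) (hj2 : j ≤ n) (hi : i ≤ n - 1) :
    A n i j = A n (n - 1 - i) (n + 1 - j) := by
  classical
  unfold A
  refine Finset.card_bij' (fun w _ => Fin.revPerm * w) (fun w _ => Fin.revPerm * w) ?_ ?_ ?_ ?_
  · rintro w hw
    simp only [Finset.mem_filter, Finset.mem_univ, true_and] at hw ⊢
    obtain ⟨hval, hdes⟩ := hw
    constructor
    · intro x hx
      have h1 := hval x hx
      have h2 : (w x : ℕ) < n := (w x).is_lt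
      simp only [Equiv.Perm.mul_apply, Fin.revPerm_apply, Fin.val_rev]
      omega
    · have := des_rev hn w
      omega
  · rintro w hw
    simp only [Finset.mem_filter, Finset.mem_univ, true_and] at hw ⊢
    obtain ⟨hval, hdes⟩ := hw
    constructor
    · intro x hx
      have h1 := hval x hx
      have h2 : (w x : ℕ) < n := (w x).is_lt
      simp only [Equiv.Perm.mul_apply, Fin.revPerm_apply, Fin.val_rev]
      omega
    · have := des_rev hn w
      omega
  · intro w _
    ext x
    simp [Equiv.Perm.mul_apply]
  · intro w _
    ext x
    simp [Equiv.Perm.mul_apply]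

theorem stmt6 (n j : ℕ) (hj1 : 1 ≤ j) (hj : 2 * j < n + 1) :
    ∀ i ≤ n, (AhatPoly' n j).coeff i = (AhatPoly' n j).coeff (n - i) := by
  have hn : 2 ≤ n := by omega
  have hj2 : j ≤ n := by omega
  have hj3 : 1 ≤ n + 1 - j := by omega
  have hj4 : n + 1 - j ≤ n := by omega
  have hjj : n + 1 - (n + 1 - j) = j := by omega
  have key : ∀ k, (AhatPoly' n j).coeff k
      = (if k = 0 then 0 else (A n (k - 1) j : ℤ)) + (A n k (n + 1 - j) : ℤ) := by
    intro k
    unfold AhatPoly'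
    rw [Polynomial.coeff_add, coeff_Apoly]
    congr 1
    cases k with
    | zero => simp
    | succ m => rw [Polynomial.coeff_X_mul, coeff_Apoly]; simp
  intro i hi
  rw [key i, key (n - i)]
  by_cases h0 : i = 0
  · subst h0
    have h1 := A_symm n (n - 1) j (by omega) hj1 hj2 le_rfl
    rw [show n - 1 - (n - 1) = 0 from by omega] at h1
    have h2 := A_big n n (n + 1 - j) (by omega) le_rfl
    simp only [Nat.sub_zero, if_pos rfl, if_neg (by omega : ¬ n = 0)]
    rw [show n - 1 = n - 1 from rfl, ← h1, h2]
    push_cast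
    ring
  · by_cases hn' : i = n
    · rw [hn']
      have h1 := A_symm n (n - 1) j (by omega) hj1 hj2 le_rfl
      rw [show n - 1 - (n - 1) = 0 from by omega] at h1
      have h2 := A_big n n (n + 1 - j) (by omega) le_rfl
      simp only [Nat.sub_self, if_pos rfl, if_neg (by omega : ¬ n = 0)]
      rw [h1, h2]
      push_cast
      ring
    · have hile : i ≤ n - 1 := by omega
      have h1 := A_symm n (i - 1) j (by omega) hj1 hj2 (by omega)
      rw [show n - 1 - (i - 1) = n - i from by omega] at h1
      have h2 := A_symm n i (n + 1 - j) (by omega) hj3 hj4 (by omega)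
      rw [show n - 1 - i = n - i - 1 from by omega, hjj] at h2
      rw [if_neg h0, if_neg (by omega : ¬ n - i = 0), h1, h2]
      ring
end

section
/- For odd n and j = (n+1)/2, the restricted Eulerian polynomial satisfies A_{n,(n+1)/2}(t) = Σ_{k=1}^{(n-1)/2} (t·A_{n-1,k}(t) + A_{n-1,n-k}(t)). -/
open scoped Classical

open Polynomial

/-!
Removing the first letter `p` of a permutation of `Fin (n + 1)` and standardizing the
remaining word is a bijection onto the permutations of `Fin n`, and it loses a descent exactly
when the new first letter lies below `p`. Hence `A_{n+1,p+1} = Σ_k t^[k < p] A_{n,k+1}`.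
For `n + 1 = 2a + 1` and `p = a` the terms `k < a` give `t A_{2a,k+1}`, and the terms `k ≥ a`,
reindexed by `k ↦ 2a - k`, give `A_{2a,2a+1-k}`.
-/

open Finset

section Descents

variable {α β : Type*} [LinearOrder α] [LinearOrder β]

def descentCount {m : ℕ} (f : Fin (m + 1) → α) : ℕ :=
  #{i : Fin m | f i.succ < f i.castSucc}

lemma descentCount_cons {m : ℕ} (a : α) (f : Fin (m + 1) → α) :
    descentCount (Fin.cons a f : Fin (m + 2) → α) =
      (if f 0 < a then 1 else 0) + descentCount f := by
  simp only [descentCount, card_filter, Fin.sum_univ_succ, Fin.cons_succ, Fin.castSucc_zero,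
    Fin.cons_zero, ← Fin.succ_castSucc]

lemma descentCount_comp_strictMono {m : ℕ} {g : α → β} (hg : StrictMono g)
    (f : Fin (m + 1) → α) : descentCount (g ∘ f) = descentCount f := by
  simp only [descentCount, Function.comp_apply, hg.lt_iff_lt]

end Descents

lemma des_eq_descentCount {m : ℕ} (w : Equiv.Perm (Fin (m + 1))) : des w = descentCount w := by
  rw [des, descentCount, card_filter, card_filter, Fin.sum_univ_castSucc]
  simp [Fin.succ]

noncomputable def consPerm {m : ℕ} (p : Fin (m + 1)) (u : Equiv.Perm (Fin m)) :
    Equiv.Perm (Fin (m + 1)) :=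
  Equiv.ofBijective (Fin.cons p (p.succAbove ∘ u)) <| Finite.injective_iff_bijective.mp <|
    Fin.cons_injective_iff.mpr
      ⟨fun ⟨i, hi⟩ => p.succAbove_ne (u i) hi, p.succAbove_right_injective.comp u.injective⟩

@[simp] lemma consPerm_zero {m : ℕ} (p : Fin (m + 1)) (u : Equiv.Perm (Fin m)) :
    consPerm p u 0 = p := by
  simp [consPerm]

lemma coe_consPerm {m : ℕ} (p : Fin (m + 1)) (u : Equiv.Perm (Fin m)) :
    ⇑(consPerm p u) = Fin.cons p (p.succAbove ∘ u) := rfl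

lemma consPerm_uncurry_bijective (m : ℕ) :
    Function.Bijective fun x : Fin (m + 1) × Equiv.Perm (Fin m) => consPerm x.1 x.2 := by
  refine (Fintype.bijective_iff_injective_and_card _).mpr ⟨?_, ?_⟩
  · rintro ⟨p, u⟩ ⟨q, v⟩ h
    have hpq : p = q := by simpa using congr($h 0)
    subst hpq
    refine Prod.ext rfl (Equiv.ext fun i => p.succAbove_right_injective ?_)
    simpa [coe_consPerm] using congr($h i.succ)
  · simp [Fintype.card_perm, Nat.factorial_succ]

lemma des_consPerm {m : ℕ} (p : Fin (m + 2)) (u : Equiv.Perm (Fin (m + 1))) :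
    des (consPerm p u) = (if (u 0 : ℕ) < p then 1 else 0) + des u := by
  rw [des_eq_descentCount, des_eq_descentCount, coe_consPerm, descentCount_cons,
    descentCount_comp_strictMono (Fin.strictMono_succAbove p)]
  simp only [Function.comp_apply, Fin.succAbove_lt_iff_castSucc_lt]
  rfl

lemma Apoly_succ_eq_sum_ite (m j : ℕ) :
    Apoly (m + 1) (j + 1) =
      ∑ w : Equiv.Perm (Fin (m + 1)), if (w 0 : ℕ) = j then X ^ des w else 0 := by
  rw [Apoly, sum_filter]
  refine sum_congr rfl fun w _ => if_congr ⟨fun h => Nat.succ_injective (h 0 rfl), ?_⟩ rfl rfl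
  rintro h x hx
  rw [show x = 0 from Fin.ext hx, h]

lemma Apoly_rec (m : ℕ) (p : Fin (m + 2)) :
    Apoly (m + 2) (p + 1) =
      ∑ k ∈ range (m + 1), (if k < p then X else 1) * Apoly (m + 1) (k + 1) := by
  calc Apoly (m + 2) (p + 1)
      = ∑ x : Fin (m + 2) × Equiv.Perm (Fin (m + 1)),
          if x.1 = p then X ^ des (consPerm x.1 x.2) else 0 := by
        rw [Apoly_succ_eq_sum_ite]
        exact (Fintype.sum_bijective _ (consPerm_uncurry_bijective _) _ _
          fun x => by simp [Fin.val_inj]).symm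
    _ = ∑ u : Equiv.Perm (Fin (m + 1)), (if (u 0 : ℕ) < p then X else 1) * X ^ des u := by
        simp [Fintype.sum_prod_type, des_consPerm, pow_add]
    _ = _ := by
        simp_rw [Apoly_succ_eq_sum_ite, mul_sum, mul_ite, mul_zero]
        rw [sum_comm]
        simp [Fin.is_le]

lemma sum_range_ite_mul_eq_sum_Icc {R : Type*} [CommSemiring R] (x : R) (B : ℕ → R) (a : ℕ) :
    ∑ k ∈ range (a + a), (if k < a then x else 1) * B (k + 1) =
      ∑ k ∈ Icc 1 a, (x * B k + B (a + a + 1 - k)) := by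
  rw [sum_range_add, ← Ico_add_one_right_eq_Icc, sum_Ico_eq_sum_range, Nat.add_sub_cancel,
    sum_add_distrib, ← sum_range_reflect (fun k => B (a + a + 1 - (1 + k)))]
  congr 1
  · refine sum_congr rfl fun k hk => ?_
    rw [if_pos (mem_range.mp hk), add_comm k]
  · refine sum_congr rfl fun k hk => ?_
    have := mem_range.mp hk
    rw [if_neg (by omega), one_mul]
    congr 1
    omega

theorem stmt7 (n : ℕ) (hn : 3 ≤ n) (hodd : Odd n) :
    Apoly n ((n + 1) / 2) =
      ∑ k ∈ Finset.Icc 1 ((n - 1) / 2), (X * Apoly (n - 1) k + Apoly (n - 1) (n - k)) := by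
  obtain ⟨a, rfl⟩ := hodd
  obtain ⟨m, hm⟩ : ∃ m, a + a = m + 1 := ⟨a + a - 1, by omega⟩
  have hrec : Apoly (m + 2) (a + 1) =
      ∑ k ∈ range (m + 1), (if k < a then X else 1) * Apoly (m + 1) (k + 1) :=
    Apoly_rec m ⟨a, by omega⟩
  rw [show m + 2 = a + a + 1 by omega, ← hm, sum_range_ite_mul_eq_sum_Icc] at hrec
  rw [two_mul, show (a + a + 1 + 1) / 2 = a + 1 by omega, Nat.add_sub_cancel,
    show (a + a) / 2 = a by omega]
  exact hrec
end

section
/- For n even and 1 ≤ j < (n+1)/2, the symmetric restricted Eulerian polynomial satisfies Â_{n,j}(t) = 2 Σ_{k=1}^{j-1} Â'_{n-1,k}(t) + (1+t) Σ_{k=j}^{n/2} Â_{n-1,k}(t). -/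
open scoped Classical

open Polynomial

/-!
Deleting the first letter `j` of a permutation of `{1, …, n}` and standardizing the rest is a
bijection onto the permutations of `{1, …, n - 1}`; it loses one descent exactly when the new
first letter is below `j`, so `A_{n,j} = t Σ_{k<j} A_{n-1,k} + Σ_{k≥j} A_{n-1,k}`.
For `n = 2h`, let `a`, `M`, `C` be the sums of `A_{n-1,k}` over `k < j`, `j ≤ k ≤ n - j` and
`k > n - j`. Then `A_{n,j} + A_{n,n+1-j} = 2(t a + C) + (1 + t) M`, and the reflection
`k ↦ n - k` identifies `t a + C` with `Σ_{k<j} Â'_{n-1,k}` and `M` with `Σ_{k=j}^{h} Â_{n-1,k}`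
(the middle index `k = h` being counted once on both sides).
-/

open Equiv Finset

lemma Fin.forall_val_eq_zero_imp_iff {N : ℕ} (P : Fin (N + 1) → Prop) :
    (∀ x : Fin (N + 1), (x : ℕ) = 0 → P x) ↔ P 0 :=
  ⟨fun h => h 0 rfl, fun h x hx => (Fin.ext hx : x = 0) ▸ h⟩

namespace Equiv.Perm

lemma des_eq_sum {N : ℕ} (w : Perm (Fin (N + 1))) :
    des w = ∑ i : Fin N, if w i.succ < w i.castSucc then 1 else 0 := by
  rw [des, card_filter, Fin.sum_univ_castSucc, Fin.val_last, if_neg (by simp), add_zero]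
  refine sum_congr rfl fun i _ => if_congr ?_ rfl rfl
  simp only [Fin.val_castSucc, i.isLt, Nat.add_lt_add_right, exists_true_left]
  rfl

/-- The permutation of `Fin (m + 1)` with first letter `a`, followed by the letters of `v`
relabelled order-preservingly to avoid `a`. -/
def cons {m : ℕ} (a : Fin (m + 1)) (v : Perm (Fin m)) : Perm (Fin (m + 1)) :=
  (finSuccEquiv m).trans ((optionCongr v).trans (finSuccEquiv' a).symm)

@[simp] lemma cons_zero {m : ℕ} (a : Fin (m + 1)) (v : Perm (Fin m)) : cons a v 0 = a := by
  simp [cons]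

@[simp] lemma cons_succ {m : ℕ} (a : Fin (m + 1)) (v : Perm (Fin m)) (i : Fin m) :
    cons a v i.succ = a.succAbove (v i) := by
  simp [cons]

/-- The standardization of `w` with its first letter removed. -/
def tail {m : ℕ} (w : Perm (Fin (m + 1))) : Perm (Fin m) :=
  removeNone ((finSuccEquiv m).symm.trans (w.trans (finSuccEquiv' (w 0))))

lemma succAbove_tail {m : ℕ} (w : Perm (Fin (m + 1))) (i : Fin m) :
    (w 0).succAbove (tail w i) = w i.succ := by
  obtain ⟨y, hy⟩ := Fin.exists_succAbove_eq (w.injective.ne (Fin.succ_ne_zero i))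
  have hsome : ((finSuccEquiv m).symm.trans (w.trans (finSuccEquiv' (w 0)))) (some i) = some y := by
    simp [← hy]
  rw [← hy, tail, Option.some_injective _ ((removeNone_some _ ⟨y, hsome⟩).trans hsome)]

lemma tail_cons {m : ℕ} (a : Fin (m + 1)) (v : Perm (Fin m)) : tail (cons a v) = v := by
  ext i
  have h := succAbove_tail (cons a v) i
  rw [cons_succ, cons_zero] at h
  rw [a.succAbove_right_injective h]

lemma cons_tail {m : ℕ} (w : Perm (Fin (m + 1))) : cons (w 0) (tail w) = w := by
  ext x
  induction x using Fin.cases with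
  | zero => rw [cons_zero]
  | succ i => rw [cons_succ, succAbove_tail]

lemma des_cons {m : ℕ} (a : Fin (m + 2)) (v : Perm (Fin (m + 1))) :
    des (cons a v) = des v + if (v 0).castSucc < a then 1 else 0 := by
  rw [des_eq_sum, des_eq_sum, Fin.sum_univ_succ, add_comm]
  congr 1
  · refine sum_congr rfl fun i _ => ?_
    simp only [← Fin.succ_castSucc, cons_succ, Fin.succAbove_lt_succAbove_iff]
  · simp only [Fin.castSucc_zero, cons_succ, cons_zero, Fin.succAbove_lt_iff_castSucc_lt]

lemma sum_filter_apply_zero_eq {M : Type*} [AddCommMonoid M] {m : ℕ}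
    (a : Fin (m + 1)) (F : Perm (Fin (m + 1)) → M) :
    ∑ w ∈ univ.filter (fun w : Perm (Fin (m + 1)) => w 0 = a), F w = ∑ v, F (cons a v) :=
  sum_nbij' tail (cons a) (fun _ _ => mem_univ _) (by simp)
    (fun w hw => by rw [← (mem_filter.1 hw).2, cons_tail]) (fun v _ => tail_cons a v)
    (fun w hw => by rw [← (mem_filter.1 hw).2, cons_tail])

end Equiv.Perm

lemma Finset.sum_Ico_add_reflect {M : Type*} [AddCommMonoid M] (f : ℕ → M) {j h : ℕ}
    (hjh : j ≤ h) :
    ∑ k ∈ Ico j h, (f k + f (2 * h - k)) + f h = ∑ k ∈ Ico j (2 * h + 1 - j), f k := by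
  rw [sum_add_distrib, sum_Ico_reflect f j (by omega : h ≤ 2 * h + 1),
    show 2 * h + 1 - h = h + 1 by omega, add_right_comm, ← sum_Ico_succ_top hjh,
    sum_Ico_consecutive _ (by omega) (by omega)]

lemma Apoly_succ_val_succ {N : ℕ} (k : Fin (N + 1)) :
    Apoly (N + 1) (k + 1) =
      ∑ w ∈ univ.filter (fun w : Perm (Fin (N + 1)) => w 0 = k), X ^ des w := by
  rw [Apoly]
  congr 1
  refine filter_congr fun w _ => ?_
  rw [Fin.forall_val_eq_zero_imp_iff, Fin.ext_iff]
  omega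

lemma AhatPoly_of_ne {n c : ℕ} (hn : n ≠ 0) (hc : c ≠ n + 1 - c) :
    AhatPoly n c = Apoly n c + Apoly n (n + 1 - c) := by
  obtain ⟨N, rfl⟩ := Nat.exists_eq_succ_of_ne_zero hn
  simp only [AhatPoly, Apoly, Fin.forall_val_eq_zero_imp_iff, filter_or]
  refine sum_union (disjoint_left.2 fun w h1 h2 => hc ?_)
  rw [mem_filter] at h1 h2
  omega

lemma AhatPoly_of_eq {n c : ℕ} (hc : c = n + 1 - c) : AhatPoly n c = Apoly n c := by
  rw [AhatPoly, Apoly, ← hc]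
  simp only [or_self]

lemma Apoly_succ_succ_val_succ {m : ℕ} (a : Fin (m + 2)) :
    Apoly (m + 2) (a + 1) =
      ∑ k : Fin (m + 1), (if k.castSucc < a then X else 1) * Apoly (m + 1) (k + 1) := by
  rw [Apoly_succ_val_succ, Perm.sum_filter_apply_zero_eq,
    ← sum_fiberwise univ (fun v : Perm (Fin (m + 1)) => v 0)]
  refine sum_congr rfl fun k _ => ?_
  rw [Apoly_succ_val_succ, mul_sum]
  refine sum_congr rfl fun v hv => ?_
  rw [Perm.des_cons, pow_add, (mem_filter.1 hv).2, mul_comm]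
  split_ifs <;> simp

lemma Apoly_succ_succ {m j : ℕ} (hj1 : 1 ≤ j) (hj : j ≤ m + 2) :
    Apoly (m + 2) j =
      X * ∑ k ∈ Ico 1 j, Apoly (m + 1) k + ∑ k ∈ Ico j (m + 2), Apoly (m + 1) k := by
  obtain ⟨a, rfl⟩ : ∃ a : Fin (m + 2), j = a + 1 := ⟨⟨j - 1, by omega⟩, by simp; omega⟩
  have hsum : ∑ k : Fin (m + 1), (if k.castSucc < a then X else 1) * Apoly (m + 1) (k + 1) =
      ∑ k ∈ Ico 1 (m + 2), (if k < a + 1 then X else 1) * Apoly (m + 1) k := by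
    simp only [Fin.lt_def, Fin.val_castSucc]
    rw [Fin.sum_univ_eq_sum_range (fun k => (if k < (a : ℕ) then X else 1) * Apoly (m + 1) (k + 1)),
      sum_Ico_eq_sum_range]
    refine sum_congr rfl fun k _ => ?_
    simp only [add_comm 1 k, Nat.add_lt_add_iff_right]
  rw [Apoly_succ_succ_val_succ, hsum, ← sum_Ico_consecutive _ hj1 hj, mul_sum]
  congr 1
  · exact sum_congr rfl fun k hk => by rw [if_pos (mem_Ico.1 hk).2]
  · exact sum_congr rfl fun k hk => by rw [if_neg (mem_Ico.1 hk).1.not_gt, one_mul]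

lemma sum_Ico_AhatPoly' {N j : ℕ} (hj : j ≤ N + 3) :
    ∑ k ∈ Ico 1 j, AhatPoly' (N + 1) k =
      X * ∑ k ∈ Ico 1 j, Apoly (N + 1) k + ∑ k ∈ Ico (N + 3 - j) (N + 2), Apoly (N + 1) k := by
  simp only [AhatPoly']
  rw [sum_add_distrib, ← mul_sum, sum_Ico_reflect _ 1 hj]
  rfl

lemma sum_Icc_AhatPoly {N h j : ℕ} (hN : N + 2 = 2 * h) (hjh : j ≤ h) :
    ∑ k ∈ Icc j h, AhatPoly (N + 1) k = ∑ k ∈ Ico j (N + 3 - j), Apoly (N + 1) k := by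
  rw [← Ico_add_one_right_eq_Icc, sum_Ico_succ_top hjh, AhatPoly_of_eq (by omega),
    sum_congr rfl fun k hk => AhatPoly_of_ne N.succ_ne_zero (by rw [mem_Ico] at hk; omega),
    show N + 1 + 1 = 2 * h by omega,
    sum_Ico_add_reflect _ hjh, show N + 3 - j = 2 * h + 1 - j by omega]

theorem stmt8 (n j : ℕ) (heven : Even n) (hj1 : 1 ≤ j) (hj : 2 * j ≤ n) :
    AhatPoly n j =
      2 * (∑ k ∈ Finset.Icc 1 (j - 1), AhatPoly' (n - 1) k) +
        (1 + X) * ∑ k ∈ Finset.Icc j (n / 2), AhatPoly (n - 1) k := by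
  obtain ⟨m, rfl⟩ : ∃ m, n = m + 2 := ⟨n - 2, by omega⟩
  obtain ⟨h, hh⟩ := heven
  rw [show m + 2 - 1 = m + 1 from rfl, show (m + 2) / 2 = h by omega,
    ← Ico_add_one_right_eq_Icc 1, Nat.sub_add_cancel hj1, sum_Ico_AhatPoly' (by omega),
    sum_Icc_AhatPoly (by omega) (by omega), AhatPoly_of_ne (by omega) (by omega),
    Apoly_succ_succ hj1 (by omega), Apoly_succ_succ (by omega) (by omega : m + 3 - j ≤ m + 2)]
  have hmid : j ≤ m + 3 - j := by omega
  rw [← sum_Ico_consecutive _ hj1 hmid,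
    ← sum_Ico_consecutive _ hmid (by omega : m + 3 - j ≤ m + 2)]
  ring
end

section
/- For all positive integers a, k, d with k < d, the position r_{d,k}(a) of the image under φ_d of the a-th d-1-colored k-subset in the revlex order on d-colored k-subsets satisfies r_{d,k}(a) ≤ (k+1)a. -/
open scoped Classical

/-- `S` is a `d`-colored `k`-subset of ℕ: `k` positive integers, no two
congruent modulo `d`. -/
def ColoredSet (d k : ℕ) (S : Finset ℕ) : Prop :=
  S.card = k ∧ (∀ s ∈ S, 0 < s) ∧ ∀ a ∈ S, ∀ b ∈ S, a % d = b % d → a = b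

/-- Reverse lexicographic order on finite subsets of ℕ: `S ≤ T` iff `S = T` or
the largest element where they differ belongs to `T`. -/
def RevlexLE (S T : Finset ℕ) : Prop :=
  S = T ∨ ∃ m ∈ T, m ∉ S ∧ ∀ x ∈ S, x ∉ T → x < m

/-- The map `φ_d`: if `s = (d-1)·i + j` with `1 ≤ j ≤ d-1`, then
`φ_d(s) = d·i + j = s + i`. -/
def PhiD (d s : ℕ) : ℕ := s + (s - 1) / (d - 1)

/-- The (1-based) position of `S` in the revlex order on `d`-colored
`k`-subsets: the number of `d`-colored `k`-subsets `T` with `T ≤ S`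
(all such `T` lie in `{0,…,max S}`). -/
noncomputable def posIdx (d k : ℕ) (S : Finset ℕ) : ℕ :=
  (((Finset.range (S.sup id + 1)).powerset).filter
    fun T => ColoredSet d k T ∧ RevlexLE T S).card



def psiN (d t : ℕ) : ℕ := t - t / d

lemma psiN_mono (d : ℕ) : Monotone (psiN d) := by
  apply monotone_nat_of_le_succ
  intro t
  rcases Nat.eq_zero_or_pos d with h | h
  · simp [psiN, h]
  · have h1 : (t+1)/d ≤ (t+d)/d := Nat.div_le_div_right (by omega)
    have h2 : (t+d)/d = t/d + 1 := Nat.add_div_right t h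
    have h3 : t / d ≤ t := Nat.div_le_self t d
    simp only [psiN]; omega

lemma succ_pred_mul (d q : ℕ) (hd : 1 ≤ d) : d * q = (d-1)*q + q := by
  cases d with
  | zero => omega
  | succ n => simp [Nat.succ_mul, Nat.succ_sub_one]

lemma psiN_repr (d t : ℕ) (hd : 1 ≤ d) : psiN d t = (d-1) * (t/d) + t % d := by
  have h := Nat.div_add_mod t d
  have h2 := succ_pred_mul d (t/d) hd
  simp only [psiN]
  generalize (d-1) * (t/d) = Y at *
  generalize d * (t/d) = X at *
  omega

lemma mod_inj' (d j j' : ℕ) (hd : 2 ≤ d) (h1 : 1 ≤ j) (h2 : j ≤ d-1)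
    (h3 : 1 ≤ j') (h4 : j' ≤ d-1) (h : j % (d-1) = j' % (d-1)) : j = j' := by
  have e1 : j % (d-1) = if j = d-1 then 0 else j := by
    split
    · subst j; exact Nat.mod_self _
    · exact Nat.mod_eq_of_lt (by omega)
  have e2 : j' % (d-1) = if j' = d-1 then 0 else j' := by
    split
    · subst j'; exact Nat.mod_self _
    · exact Nat.mod_eq_of_lt (by omega)
  rw [e1, e2] at h
  split at h <;> split at h <;> omega

lemma myDivRepr (d i x : ℕ) (hd : 1 ≤ d) (hx : x < d) : (d * i + x) / d = i := by
  rw [Nat.mul_add_div (by omega)]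
  simp [Nat.div_eq_of_lt hx]

lemma psiN_of_repr (d i j : ℕ) (hd : 2 ≤ d) (hj : j < d) :
    psiN d (d*i+j) = (d-1)*i + j := by
  rw [psiN_repr _ _ (by omega), myDivRepr d i j (by omega) hj, Nat.mul_add_mod,
    Nat.mod_eq_of_lt hj]

lemma phiD_of_repr (d i j : ℕ) (hd : 2 ≤ d) (h1 : 1 ≤ j) (hj : j ≤ d-1) :
    PhiD d ((d-1)*i + j) = d*i + j := by
  simp only [PhiD]
  have e1 : (d-1)*i + j - 1 = (d-1)*i + (j-1) := by omega
  rw [e1, Nat.mul_add_div (by omega), Nat.div_eq_of_lt (show j - 1 < d-1 by omega)]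
  have h := succ_pred_mul d i (by omega)
  generalize (d-1)*i = X at *
  generalize d*i = Y at *
  omega

lemma phiD_spec (d s : ℕ) (hd : 2 ≤ d) (hs : 1 ≤ s) :
    ∃ i j, 1 ≤ j ∧ j ≤ d - 1 ∧ s = (d-1)*i + j ∧ PhiD d s = d*i + j := by
  refine ⟨(s-1)/(d-1), (s-1)%(d-1)+1, by omega, ?_, ?_, ?_⟩
  · have := Nat.mod_lt (s-1) (y := d-1) (by omega)
    omega
  · have h := Nat.div_add_mod (s-1) (d-1)
    generalize (d-1) * ((s-1)/(d-1)) = X at *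
    omega
  · have hrep : s = (d-1)*((s-1)/(d-1)) + ((s-1)%(d-1)+1) := by
      have h := Nat.div_add_mod (s-1) (d-1)
      generalize (d-1) * ((s-1)/(d-1)) = X at *
      omega
    conv_lhs => rw [hrep]
    exact phiD_of_repr d _ _ hd (by omega)
      (by have := Nat.mod_lt (s-1) (y := d-1) (by omega); omega)

lemma phiD_mod (d s : ℕ) (hd : 2 ≤ d) (hs : 1 ≤ s) : PhiD d s % d ≠ 0 := by
  obtain ⟨i, j, hj1, hj2, _, he⟩ := phiD_spec d s hd hs
  rw [he, Nat.mul_add_mod, Nat.mod_eq_of_lt (by omega)]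
  omega

lemma phiD_pos (d s : ℕ) (hs : 1 ≤ s) : 1 ≤ PhiD d s := by
  simp only [PhiD]
  generalize (s-1)/(d-1) = q
  omega

lemma psiN_phiD (d s : ℕ) (hd : 2 ≤ d) (hs : 1 ≤ s) : psiN d (PhiD d s) = s := by
  obtain ⟨i, j, hj1, hj2, hs', he⟩ := phiD_spec d s hd hs
  rw [he, psiN_of_repr d i j hd (by omega)]
  exact hs'.symm

lemma tRepr (d t : ℕ) (hd : 2 ≤ d) (ht : 1 ≤ t) (h : t % d ≠ 0) :
    ∃ i j, 1 ≤ j ∧ j ≤ d - 1 ∧ t = d*i + j := by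
  refine ⟨t/d, t%d, by omega, ?_, (Nat.div_add_mod t d).symm⟩
  have := Nat.mod_lt t (y := d) (by omega)
  omega

lemma phiD_psiN (d t : ℕ) (hd : 2 ≤ d) (ht : 1 ≤ t) (h : t % d ≠ 0) :
    PhiD d (psiN d t) = t := by
  obtain ⟨i, j, hj1, hj2, he⟩ := tRepr d t hd ht h
  rw [he, psiN_of_repr d i j hd (by omega), phiD_of_repr d i j hd hj1 hj2]

lemma psiN_pos (d t : ℕ) (hd : 2 ≤ d) (ht : 1 ≤ t) : 1 ≤ psiN d t := by
  have := Nat.div_lt_self (by omega : 0 < t) (by omega : 1 < d)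
  simp only [psiN]; omega

lemma psiN_lt_psiN (d t t' : ℕ) (hd : 2 ≤ d) (ht : 1 ≤ t) (h : t % d ≠ 0)
    (h' : t' % d ≠ 0) (hlt : t < t') : psiN d t < psiN d t' := by
  have hle : psiN d t ≤ psiN d t' := psiN_mono d (le_of_lt hlt)
  rcases eq_or_lt_of_le hle with he | h2
  · exfalso
    have e1 := phiD_psiN d t hd ht h
    have e2 := phiD_psiN d t' hd (by omega) h'
    rw [← he] at e2
    omega
  · exact h2

lemma psiN_mod (d t : ℕ) (hd : 2 ≤ d) : psiN d t % (d-1) = (t % d) % (d-1) := by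
  rw [psiN_repr d t (by omega), Nat.mul_add_mod]

noncomputable def Jset (d : ℕ) (U' : Finset ℕ) : Finset ℕ :=
  (Finset.Icc 1 (d-1)).filter fun j => ∀ u ∈ U', u % (d-1) ≠ j % (d-1)

noncomputable def jChoice (d : ℕ) (U' : Finset ℕ) : ℕ :=
  if h2 : (Jset d U').Nonempty then (Jset d U').min' h2 else 1

noncomputable def multSet (d : ℕ) (T : Finset ℕ) : Finset ℕ :=
  T.filter (fun t => t % d = 0)

noncomputable def t0of (d : ℕ) (T : Finset ℕ) : ℕ := (multSet d T).sup id

noncomputable def U'of (d : ℕ) (T : Finset ℕ) : Finset ℕ :=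
  (T.erase (t0of d T)).image (psiN d)

noncomputable def u0of (d : ℕ) (T : Finset ℕ) : ℕ :=
  (d-1) * (t0of d T / d - 1) + jChoice d (U'of d T)

noncomputable def Fmap (d k : ℕ) (T : Finset ℕ) : Finset ℕ × ℕ :=
  if (multSet d T).Nonempty then
    (insert (u0of d T) (U'of d T), ((U'of d T).filter (· < u0of d T)).card)
  else (T.image (psiN d), k)

noncomputable def pick (p : Finset ℕ × ℕ) : ℕ :=
  (p.1.filter fun u => (p.1.filter (· < u)).card = p.2).sup id

noncomputable def Gmap (d k : ℕ) (p : Finset ℕ × ℕ) : Finset ℕ :=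
  if p.2 = k then p.1.image (PhiD d)
  else insert (d * ((pick p - 1)/(d-1) + 1)) ((p.1.erase (pick p)).image (PhiD d))

lemma rank_inj (U : Finset ℕ) (u u' : ℕ) (hu : u ∈ U) (hu' : u' ∈ U)
    (h : (U.filter (· < u)).card = (U.filter (· < u')).card) : u = u' := by
  rcases lt_trichotomy u u' with hlt | he | hlt
  · exfalso
    have hss : U.filter (· < u) ⊂ U.filter (· < u') := by
      refine ⟨fun x hx => ?_, fun hsub => ?_⟩
      · simp only [Finset.mem_filter] at hx ⊢
        exact ⟨hx.1, by omega⟩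
      have : u ∈ U.filter (· < u') := Finset.mem_filter.2 ⟨hu, hlt⟩
      have := hsub this
      simp at this
    exact absurd h (Nat.ne_of_lt (Finset.card_lt_card hss))
  · exact he
  · exfalso
    have hss : U.filter (· < u') ⊂ U.filter (· < u) := by
      refine ⟨fun x hx => ?_, fun hsub => ?_⟩
      · simp only [Finset.mem_filter] at hx ⊢
        exact ⟨hx.1, by omega⟩
      have : u' ∈ U.filter (· < u) := Finset.mem_filter.2 ⟨hu', hlt⟩
      have := hsub this
      simp at this
    exact absurd h.symm (Nat.ne_of_lt (Finset.card_lt_card hss))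

lemma revlex_le_sup (U S : Finset ℕ) (h : RevlexLE U S) (x : ℕ) (hx : x ∈ U) :
    x ≤ S.sup id := by
  rcases h with rfl | ⟨m, hmS, _, hb⟩
  · exact Finset.le_sup (f := id) hx
  · by_cases hxS : x ∈ S
    · exact Finset.le_sup (f := id) hxS
    · have h1 := hb x hx hxS
      have h2 := Finset.le_sup (f := id) hmS
      simp only [id] at h2 ⊢
      omega

lemma image_psiN_colored (d : ℕ) (hd : 2 ≤ d) (T' : Finset ℕ)
    (hpos : ∀ t ∈ T', 0 < t) (hnm : ∀ t ∈ T', t % d ≠ 0)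
    (hcol : ∀ a ∈ T', ∀ b ∈ T', a % d = b % d → a = b) :
    (T'.image (psiN d)).card = T'.card ∧ (∀ u ∈ T'.image (psiN d), 0 < u) ∧
    ∀ u ∈ T'.image (psiN d), ∀ v ∈ T'.image (psiN d), u % (d-1) = v % (d-1) → u = v := by
  have hinj : Set.InjOn (psiN d) T' := by
    intro x hx y hy hxy
    have e1 := phiD_psiN d x hd (hpos x hx) (hnm x hx)
    have e2 := phiD_psiN d y hd (hpos y hy) (hnm y hy)
    rw [← e1, ← e2, hxy]
  refine ⟨Finset.card_image_of_injOn hinj, ?_, ?_⟩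
  · intro u hu
    rw [Finset.mem_image] at hu
    obtain ⟨t, ht, rfl⟩ := hu
    exact psiN_pos d t hd (hpos t ht)
  · intro u hu v hv huv
    rw [Finset.mem_image] at hu hv
    obtain ⟨t, ht, rfl⟩ := hu
    obtain ⟨t', ht', rfl⟩ := hv
    rw [psiN_mod d t hd, psiN_mod d t' hd] at huv
    have hb1 : t % d < d := Nat.mod_lt _ (by omega)
    have hb2 : t' % d < d := Nat.mod_lt _ (by omega)
    have : t % d = t' % d :=
      mod_inj' d _ _ hd (by have := hnm t ht; omega) (by omega)
        (by have := hnm t' ht'; omega) (by omega) huv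
    rw [hcol t ht t' ht' this]

lemma main_spec (d k : ℕ) (hk : 0 < k) (hkd : k < d) (S : Finset ℕ)
    (hS : ColoredSet (d-1) k S) (T : Finset ℕ) (hT : ColoredSet d k T)
    (hrev : RevlexLE T (S.image (PhiD d))) :
    ColoredSet (d-1) k (Fmap d k T).1 ∧ RevlexLE (Fmap d k T).1 S ∧
    (Fmap d k T).2 < k + 1 ∧ Gmap d k (Fmap d k T) = T := by
  have hd : 2 ≤ d := by omega
  obtain ⟨hScard, hSpos, hScol⟩ := hS
  obtain ⟨hTcard, hTpos, hTcol⟩ := hT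
  have hSφmem : ∀ {t}, t ∈ S.image (PhiD d) →
      psiN d t ∈ S ∧ PhiD d (psiN d t) = t ∧ t % d ≠ 0 ∧ 1 ≤ t := by
    intro t ht
    rw [Finset.mem_image] at ht
    obtain ⟨s, hs, rfl⟩ := ht
    have hs1 : 1 ≤ s := hSpos s hs
    refine ⟨?_, ?_, phiD_mod d s hd hs1, phiD_pos d s hs1⟩
    · rw [psiN_phiD d s hd hs1]; exact hs
    · rw [psiN_phiD d s hd hs1]
  by_cases hmult : (multSet d T).Nonempty
  · -- case 2: T contains a (unique) multiple of d
    obtain ⟨t', ht'mem⟩ := hmult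
    rw [multSet, Finset.mem_filter] at ht'mem
    obtain ⟨ht'T, ht'mod⟩ := ht'mem
    have huniq : ∀ t ∈ T, t % d = 0 → t = t' := by
      intro t ht hmod
      exact hTcol t ht t' ht'T (by rw [hmod, ht'mod])
    have hset : multSet d T = {t'} := by
      apply Finset.ext
      intro t
      simp only [multSet, Finset.mem_filter, Finset.mem_singleton]
      constructor
      · rintro ⟨h1, h2⟩; exact huniq t h1 h2
      · rintro rfl; exact ⟨ht'T, ht'mod⟩
    have ht0 : t0of d T = t' := by rw [t0of, hset]; simp
    set t0 := t' with ht0def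
    have ht0pos : 0 < t0 := hTpos t0 ht'T
    set i0 := t0 / d with hi0def
    have hdiv : d * i0 = t0 := by
      have h := Nat.div_add_mod t0 d
      rw [← hi0def, ht'mod] at h
      simpa using h
    have hi0pos : 1 ≤ i0 := by
      rcases Nat.eq_zero_or_pos i0 with h | h
      · rw [h, Nat.mul_zero] at hdiv; omega
      · exact h
    -- the erased set
    have herase_nm : ∀ t ∈ T.erase t0, t % d ≠ 0 := by
      intro t ht hmod
      have h1 := Finset.mem_of_mem_erase ht
      have h2 := Finset.ne_of_mem_erase ht
      exact h2 (huniq t h1 hmod)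
    have herase_pos : ∀ t ∈ T.erase t0, 0 < t :=
      fun t ht => hTpos t (Finset.mem_of_mem_erase ht)
    have herase_col : ∀ a ∈ T.erase t0, ∀ b ∈ T.erase t0, a % d = b % d → a = b :=
      fun a ha b hb h => hTcol a (Finset.mem_of_mem_erase ha) b (Finset.mem_of_mem_erase hb) h
    have hU'def : U'of d T = (T.erase t0).image (psiN d) := by rw [U'of, ht0]
    set U' := (T.erase t0).image (psiN d) with hU'
    obtain ⟨hc1, hc2, hc3⟩ := image_psiN_colored d hd (T.erase t0) herase_pos herase_nm herase_col
    have hU'card : U'.card = k - 1 := by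
      rw [hU', hc1, Finset.card_erase_of_mem ht'T, hTcard]
    -- J is nonempty
    have hJne : (Jset d U').Nonempty := by
      by_contra hJ
      have hJ' : ∀ j ∈ Finset.Icc 1 (d-1), ∃ u ∈ U', u % (d-1) = j % (d-1) := by
        intro j hj
        by_contra hcon
        push_neg at hcon
        apply hJ
        refine ⟨j, ?_⟩
        simp only [Jset, Finset.mem_filter]
        exact ⟨hj, fun u hu => hcon u hu⟩
      have hsub : (Finset.Icc 1 (d-1)).image (· % (d-1)) ⊆ U'.image (· % (d-1)) := by
        intro x hx
        rw [Finset.mem_image] at hx ⊢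
        obtain ⟨j, hj, rfl⟩ := hx
        obtain ⟨u, hu, he⟩ := hJ' j hj
        exact ⟨u, hu, he⟩
      have hinj : Set.InjOn (· % (d-1)) (Finset.Icc 1 (d-1)) := by
        intro x hx y hy hxy
        simp only [Finset.coe_Icc, Set.mem_Icc] at hx hy
        exact mod_inj' d x y hd hx.1 hx.2 hy.1 hy.2 hxy
      have h1 : ((Finset.Icc 1 (d-1)).image (· % (d-1))).card = d - 1 := by
        rw [Finset.card_image_of_injOn hinj, Nat.card_Icc]
        omega
      have h2 := Finset.card_le_card hsub
      have h3 := Finset.card_image_le (f := (· % (d-1))) (s := U')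
      omega
    have hj0 : jChoice d U' = (Jset d U').min' hJne := by rw [jChoice, dif_pos hJne]
    have hj0mem : jChoice d U' ∈ Jset d U' := by rw [hj0]; exact Finset.min'_mem _ _
    simp only [Jset, Finset.mem_filter, Finset.mem_Icc] at hj0mem
    obtain ⟨⟨hj0ge, hj0le⟩, hj0fresh⟩ := hj0mem
    set j0 := jChoice d U' with hj0def
    have hu0 : u0of d T = (d-1) * (i0 - 1) + j0 := by
      rw [u0of, ht0, hU'def]
    set u0 := (d-1) * (i0 - 1) + j0 with hu0def
    have hu0mod : u0 % (d-1) = j0 % (d-1) := by rw [hu0def, Nat.mul_add_mod]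
    have hu0notin : u0 ∉ U' := fun h => hj0fresh u0 h hu0mod
    have hu0pos : 0 < u0 := by
      have : 0 ≤ (d-1) * (i0-1) := Nat.zero_le _
      omega
    have hF : Fmap d k T = (insert u0 U', (U'.filter (· < u0)).card) := by
      rw [Fmap, if_pos]
      · rw [hu0, hU'def]
      · rw [hset]; exact Finset.singleton_nonempty _
    rw [hF]
    set U := insert u0 U' with hUdef
    have hUcard : U.card = k := by
      rw [hUdef, Finset.card_insert_of_notMem hu0notin, hU'card]
      omega
    -- U is colored
    have hUcol : ColoredSet (d-1) k U := by
      refine ⟨hUcard, ?_, ?_⟩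
      · intro x hx
        rw [hUdef, Finset.mem_insert] at hx
        rcases hx with rfl | hx
        · exact hu0pos
        · exact hc2 x hx
      · intro x hx y hy hxy
        rw [hUdef, Finset.mem_insert] at hx hy
        rcases hx with rfl | hx <;> rcases hy with rfl | hy
        · rfl
        · exact absurd (by rw [← hxy]; exact hu0mod : y % (d-1) = j0 % (d-1)) (hj0fresh y hy)
        · exact absurd (by rw [hxy]; exact hu0mod : x % (d-1) = j0 % (d-1)) (hj0fresh x hx)
        · exact hc3 x hx y hy hxy
    -- T ≠ Sφ, get witness
    have hTne : T ≠ S.image (PhiD d) := by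
      intro he
      rw [he] at ht'T
      obtain ⟨_, _, hnm, _⟩ := hSφmem ht'T
      exact hnm ht'mod
    have hwit : ∃ m ∈ S.image (PhiD d), m ∉ T ∧ ∀ x ∈ T, x ∉ S.image (PhiD d) → x < m := by
      rcases hrev with he | h
      · exact absurd he hTne
      · exact h
    obtain ⟨m, hmSφ, hmT, hbound⟩ := hwit
    obtain ⟨hwS, hwφ, hmnm, hm1⟩ := hSφmem hmSφ
    have ht0notSφ : t0 ∉ S.image (PhiD d) := by
      intro hc
      obtain ⟨_, _, hnm, _⟩ := hSφmem hc
      exact hnm ht'mod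
    have ht0m : t0 < m := hbound t0 ht'T ht0notSφ
    -- key: u0 < psiN d m
    have hu0lt : u0 < psiN d m := by
      have h1 : psiN d (t0 + 1) ≤ psiN d m := psiN_mono d (by omega)
      have h2 : psiN d (t0 + 1) = (d-1) * i0 + 1 := by
        have : t0 + 1 = d * i0 + 1 := by omega
        rw [this, psiN_of_repr d i0 1 hd (by omega)]
      have h3 : (d-1) * (i0 - 1) + (d-1) = (d-1) * i0 := by
        rw [← Nat.mul_succ]
        congr 1
        omega
      rw [hu0def]
      generalize hA : (d-1) * (i0-1) = A at *
      generalize hB : (d-1) * i0 = B at *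
      omega
    -- revlex U ≤ S
    have hUrev : RevlexLE U S := by
      right
      refine ⟨psiN d m, hwS, ?_, ?_⟩
      · intro hw
        rw [hUdef, Finset.mem_insert] at hw
        rcases hw with he | hw
        · omega
        · rw [hU', Finset.mem_image] at hw
          obtain ⟨t, ht, hpt⟩ := hw
          have e1 := phiD_psiN d t hd (herase_pos t ht) (herase_nm t ht)
          have : t = m := by rw [← e1, hpt, hwφ]
          exact hmT (this ▸ Finset.mem_of_mem_erase ht)
      · intro x hx hxS
        rw [hUdef, Finset.mem_insert] at hx
        rcases hx with rfl | hx
        · exact hu0lt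
        · rw [hU', Finset.mem_image] at hx
          obtain ⟨t, ht, rfl⟩ := hx
          have htSφ : t ∉ S.image (PhiD d) := by
            intro hc
            obtain ⟨h1, h2, _, _⟩ := hSφmem hc
            exact hxS h1
          exact psiN_lt_psiN d t m hd (herase_pos t ht) (herase_nm t ht) hmnm
            (hbound t (Finset.mem_of_mem_erase ht) htSφ)
    -- rank bound
    have hrank : (U'.filter (· < u0)).card < k := by
      have := Finset.card_le_card (Finset.filter_subset (· < u0) U')
      omega
    refine ⟨hUcol, hUrev, by omega, ?_⟩
    -- reconstruction
    rw [Gmap]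
    simp only
    rw [if_neg (by omega : ¬ (U'.filter (· < u0)).card = k)]
    have hfilU : U.filter (· < u0) = U'.filter (· < u0) := by
      rw [hUdef, Finset.filter_insert, if_neg (by omega : ¬ u0 < u0)]
    have hPsing : (U.filter fun u => (U.filter (· < u)).card = (U'.filter (· < u0)).card) = {u0} := by
      apply Finset.ext
      intro u
      simp only [Finset.mem_filter, Finset.mem_singleton]
      constructor
      · rintro ⟨huU, hcard⟩
        exact rank_inj U u u0 huU (by rw [hUdef]; exact Finset.mem_insert_self _ _)
          (by rw [hcard, hfilU])
      · rintro rfl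
        exact ⟨by rw [hUdef]; exact Finset.mem_insert_self _ _, by rw [hfilU]⟩
    have hpick : pick (U, (U'.filter (· < u0)).card) = u0 := by
      rw [pick]
      simp only
      rw [hPsing]
      simp
    rw [hpick]
    have hdivcalc : d * ((u0 - 1) / (d-1) + 1) = t0 := by
      have he : u0 - 1 = (d-1) * (i0 - 1) + (j0 - 1) := by
        rw [hu0def]
        generalize (d-1) * (i0-1) = A
        omega
      rw [he, myDivRepr (d-1) (i0-1) (j0-1) (by omega) (by omega)]
      have : i0 - 1 + 1 = i0 := by omega
      rw [this, hdiv]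
    rw [hdivcalc]
    have herase : U.erase u0 = U' := by
      rw [hUdef]
      exact Finset.erase_insert hu0notin
    rw [herase]
    have himg : U'.image (PhiD d) = T.erase t0 := by
      rw [hU', Finset.image_image]
      have he : ∀ t ∈ T.erase t0, (PhiD d ∘ psiN d) t = id t :=
        fun t ht => phiD_psiN d t hd (herase_pos t ht) (herase_nm t ht)
      rw [Finset.image_congr he, Finset.image_id]
    rw [himg]
    exact Finset.insert_erase ht'T
  · have hF : Fmap d k T = (T.image (psiN d), k) := by rw [Fmap, if_neg hmult]
    rw [hF]
    have hnm : ∀ t ∈ T, t % d ≠ 0 := by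
      intro t ht hmod
      exact hmult ⟨t, Finset.mem_filter.2 ⟨ht, hmod⟩⟩
    obtain ⟨hc1, hc2, hc3⟩ := image_psiN_colored d hd T hTpos hnm hTcol
    have himg : (T.image (psiN d)).image (PhiD d) = T := by
      rw [Finset.image_image]
      have he : ∀ t ∈ T, (PhiD d ∘ psiN d) t = id t :=
        fun t ht => phiD_psiN d t hd (hTpos t ht) (hnm t ht)
      rw [Finset.image_congr he, Finset.image_id]
    refine ⟨⟨hc1.trans hTcard, hc2, hc3⟩, ?_, by omega, ?_⟩
    · rcases hrev with he | ⟨m, hmSφ, hmT, hbound⟩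
      · left
        rw [he, Finset.image_image]
        have he2 : ∀ s ∈ S, (psiN d ∘ PhiD d) s = id s :=
          fun s hs => psiN_phiD d s hd (hSpos s hs)
        rw [Finset.image_congr he2, Finset.image_id]
      · right
        obtain ⟨hwS, hwφ, hmnm, hm1⟩ := hSφmem hmSφ
        refine ⟨psiN d m, hwS, ?_, ?_⟩
        · intro hw
          rw [Finset.mem_image] at hw
          obtain ⟨t, ht, hpt⟩ := hw
          have e1 := phiD_psiN d t hd (hTpos t ht) (hnm t ht)
          have : t = m := by rw [← e1, hpt, hwφ]
          exact hmT (this ▸ ht)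
        · intro x hx hxS
          rw [Finset.mem_image] at hx
          obtain ⟨t, ht, rfl⟩ := hx
          have htSφ : t ∉ S.image (PhiD d) := by
            intro hc
            obtain ⟨h1, h2, _, _⟩ := hSφmem hc
            exact hxS h1
          exact psiN_lt_psiN d t m hd (hTpos t ht) (hnm t ht) hmnm (hbound t ht htSφ)
    · rw [Gmap]
      simp only [if_pos rfl]
      exact himg

theorem stmt11 (a k d : ℕ) (ha : 0 < a) (hk : 0 < k) (hkd : k < d)
    (S : Finset ℕ) (hS : ColoredSet (d - 1) k S) (hpos : posIdx (d - 1) k S = a) :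
    posIdx d k (S.image (PhiD d)) ≤ (k + 1) * a := by
  have hd : 2 ≤ d := by omega
  rw [posIdx] at hpos ⊢
  set Sφ := S.image (PhiD d) with hSφ
  set A := ((Finset.range (Sφ.sup id + 1)).powerset).filter
    (fun T => ColoredSet d k T ∧ RevlexLE T Sφ) with hA
  set B := ((Finset.range (S.sup id + 1)).powerset).filter
    (fun U => ColoredSet (d-1) k U ∧ RevlexLE U S) with hB
  have hmaps : ∀ T ∈ A, Fmap d k T ∈ B ×ˢ Finset.range (k+1) := by
    intro T hTA
    rw [hA, Finset.mem_filter] at hTA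
    obtain ⟨_, hTcol, hTrev⟩ := hTA
    obtain ⟨hcol, hrev, hlab, _⟩ := main_spec d k hk hkd S hS T hTcol hTrev
    rw [Finset.mem_product]
    constructor
    · rw [hB, Finset.mem_filter, Finset.mem_powerset]
      refine ⟨?_, hcol, hrev⟩
      intro x hx
      rw [Finset.mem_range]
      have := revlex_le_sup _ _ hrev x hx
      omega
    · rw [Finset.mem_range]
      exact hlab
  have hinj : Set.InjOn (Fmap d k) A := by
    intro T1 h1 T2 h2 he
    rw [Finset.mem_coe, hA, Finset.mem_filter] at h1 h2
    obtain ⟨_, hc1, hr1⟩ := h1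
    obtain ⟨_, hc2, hr2⟩ := h2
    have g1 := (main_spec d k hk hkd S hS T1 hc1 hr1).2.2.2
    have g2 := (main_spec d k hk hkd S hS T2 hc2 hr2).2.2.2
    rw [← g1, ← g2, he]
  have hle := Finset.card_le_card_of_injOn (Fmap d k) hmaps hinj
  rw [Finset.card_product, Finset.card_range] at hle
  rw [hpos] at hle
  rw [Nat.mul_comm] at hle
  exact hle
end

section
/- The map φ_d preserves colors and revlex order: if S is a (d-1)-colored k-subset then φ_d(S) is a d-colored k-subset with col_{d-1}(S) = col_d(φ_d(S)), and if S ≤ T in revlex order on (d-1)-colored k-subsets then φ_d(S) ≤ φ_d(T) in revlex order on d-colored k-subsets. -/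
open scoped Classical

/-- The color of `s` modulo `d`, with representatives in `{1,…,d}`. -/
def colRep (d s : ℕ) : ℕ := if s % d = 0 then d else s % d

lemma phi_strictMono (d : ℕ) : StrictMono (PhiD d) := by
  intro s t h
  have := Nat.div_le_div_right (c := d - 1) (Nat.sub_le_sub_right h.le 1)
  unfold PhiD
  omega

lemma phi_mod (d s : ℕ) (hd : 2 ≤ d) (hs : 1 ≤ s) :
    PhiD d s % d = (s - 1) % (d - 1) + 1 := by
  have h1 := Nat.div_add_mod (s - 1) (d - 1)
  have h2 : (s - 1) % (d - 1) < d - 1 := Nat.mod_lt _ (by omega)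
  have h4 := Nat.sub_one_mul d ((s - 1) / (d - 1))
  have h5 : (s - 1) / (d - 1) ≤ d * ((s - 1) / (d - 1)) :=
    Nat.le_mul_of_pos_left _ (by omega)
  have h3 : PhiD d s = (s - 1) % (d - 1) + 1 + d * ((s - 1) / (d - 1)) := by
    unfold PhiD; omega
  rw [h3, Nat.add_mul_mod_self_left, Nat.mod_eq_of_lt (by omega)]

lemma s_mod (d s : ℕ) (hd : 2 ≤ d) (hs : 1 ≤ s) :
    s % (d - 1) = ((s - 1) % (d - 1) + 1) % (d - 1) := by
  have h1 := Nat.div_add_mod (s - 1) (d - 1)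
  have h : s = (s - 1) % (d - 1) + 1 + (d - 1) * ((s - 1) / (d - 1)) := by omega
  conv_lhs => rw [h]
  rw [Nat.add_mul_mod_self_left]

lemma colRep_phi (d s : ℕ) (hd : 2 ≤ d) (hs : 1 ≤ s) :
    colRep d (PhiD d s) = colRep (d - 1) s := by
  have h2 : (s - 1) % (d - 1) < d - 1 := Nat.mod_lt _ (by omega)
  have hm := phi_mod d s hd hs
  have hsm := s_mod d s hd hs
  unfold colRep
  rw [hm, hsm]
  rcases eq_or_lt_of_le (show (s - 1) % (d - 1) + 1 ≤ d - 1 by omega) with h | h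
  · rw [h, Nat.mod_self, if_neg (by omega), if_pos rfl]
  · rw [Nat.mod_eq_of_lt h, if_neg (by omega), if_neg (by omega)]

lemma mod_inj (d s t : ℕ) (hd : 2 ≤ d) (hs : 1 ≤ s) (ht : 1 ≤ t)
    (h : PhiD d s % d = PhiD d t % d) : s % (d - 1) = t % (d - 1) := by
  rw [phi_mod d s hd hs, phi_mod d t hd ht] at h
  rw [s_mod d s hd hs, s_mod d t hd ht]
  have : (s - 1) % (d - 1) = (t - 1) % (d - 1) := by omega
  rw [this]

theorem stmt12 (d k : ℕ) (hkd : k < d) :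
    (∀ S : Finset ℕ, ColoredSet (d - 1) k S →
      ColoredSet d k (S.image (PhiD d)) ∧
        S.image (colRep (d - 1)) = (S.image (PhiD d)).image (colRep d)) ∧
    (∀ S T : Finset ℕ, ColoredSet (d - 1) k S → ColoredSet (d - 1) k T →
      RevlexLE S T → RevlexLE (S.image (PhiD d)) (T.image (PhiD d))) := by
  constructor
  · intro S hS
    obtain ⟨hcard, hpos, hmod⟩ := hS
    by_cases hd : 2 ≤ d
    · refine ⟨⟨?_, ?_, ?_⟩, ?_⟩
      · rw [Finset.card_image_of_injective _ (phi_strictMono d).injective]; exact hcard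
      · intro s hs
        obtain ⟨x, hx, rfl⟩ := Finset.mem_image.mp hs
        have := hpos x hx
        exact lt_of_lt_of_le this (Nat.le_add_right _ _)
      · intro a ha b hb hab
        obtain ⟨x, hx, rfl⟩ := Finset.mem_image.mp ha
        obtain ⟨y, hy, rfl⟩ := Finset.mem_image.mp hb
        have := hmod x hx y hy (mod_inj d x y hd (hpos x hx) (hpos y hy) hab)
        rw [this]
      · rw [Finset.image_image]
        exact Finset.image_congr fun x hx => (colRep_phi d x hd (hpos x hx)).symm
    · have hd1 : d = 1 := by omega
      have hk : k = 0 := by omega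
      have hS0 : S = ∅ := Finset.card_eq_zero.mp (by omega)
      subst hd1 hk hS0
      simp [ColoredSet]
  · intro S T hS hT hST
    rcases hST with rfl | ⟨m, hmT, hmS, hlt⟩
    · exact Or.inl rfl
    · right
      refine ⟨PhiD d m, Finset.mem_image_of_mem _ hmT, ?_, ?_⟩
      · intro hc
        obtain ⟨x, hx, hxe⟩ := Finset.mem_image.mp hc
        exact hmS (((phi_strictMono d).injective hxe) ▸ hx)
      · intro x hx hxT
        obtain ⟨y, hy, rfl⟩ := Finset.mem_image.mp hx
        have hyT : y ∉ T := fun h => hxT (Finset.mem_image_of_mem _ h)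
        exact phi_strictMono d (hlt y hy hyT)
end

section
/- For all n ≥ 1 and 1 ≤ i ≤ ⌊n/2⌋ - 1, one has (i+1)·γ^{(n,1)}_i ≤ γ^{(n+1,1)}_i, where γ^{(n,1)}_i counts permutations in Ŝ_{n-1} with exactly i descents. -/
open scoped Classical

/-- Membership in `Ŝ_m`: no final descent (`w(m-1) < w(m)`, 1-based) and no
double descents (a descent is never immediately followed by a descent). -/
def ShatMem {m : ℕ} (w : Equiv.Perm (Fin m)) : Prop :=
  (∀ i : Fin m, (i : ℕ) + 2 = m → ¬ ∃ h : (i : ℕ) + 1 < m, w ⟨(i : ℕ) + 1, h⟩ < w i) ∧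
  (∀ i j : Fin m, (j : ℕ) = (i : ℕ) + 1 →
    (∃ h : (i : ℕ) + 1 < m, w ⟨(i : ℕ) + 1, h⟩ < w i) →
      ¬ ∃ h : (j : ℕ) + 1 < m, w ⟨(j : ℕ) + 1, h⟩ < w j)

/-!
Insert the largest letter `m + 1` into `w ∈ Ŝ_m` either at the very end or immediately after
one of the `des w` descents of `w`. Placed inside a descent, the new letter shifts it one step to
the right; placed at the end, it creates none. So the descent number is unchanged, and no final
or double descent can appear.
Since the slot is recovered as the position of the largest letter and `w` by deleting it,
these `des w + 1` insertions are pairwise distinct, and different `w` give different results.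
-/

open Finset

namespace Shat

variable {m : ℕ}

/-- Positions are plain natural numbers, so that arithmetic on them needs no `Fin` casts. -/
def IsDescent (w : Equiv.Perm (Fin m)) (t : ℕ) : Prop :=
  ∃ h : t + 1 < m, (w ⟨t + 1, h⟩ : ℕ) < w ⟨t, Nat.lt_of_succ_lt h⟩

lemma IsDescent.succ_lt {w : Equiv.Perm (Fin m)} {t : ℕ} (h : IsDescent w t) : t + 1 < m := h.1

lemma des_eq_card_isDescent (w : Equiv.Perm (Fin m)) :
    des w = #{p : Fin m | IsDescent w p} := by
  unfold des
  congr!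

lemma des_eq_card_Iio (w : Equiv.Perm (Fin m)) : des w = #{t ∈ Iio m | IsDescent w t} := by
  rw [des_eq_card_isDescent, ← Fin.map_valEmbedding_univ, filter_map, card_map]
  rfl

lemma shatMem_iff (w : Equiv.Perm (Fin m)) :
    ShatMem w ↔ (∀ t, t + 2 = m → ¬ IsDescent w t) ∧
      ∀ t, IsDescent w t → ¬ IsDescent w (t + 1) := by
  constructor
  · rintro ⟨hfinal, hdouble⟩
    refine ⟨fun t ht hd => hfinal ⟨t, by omega⟩ ht hd, fun t hd hd' => ?_⟩
    exact hdouble ⟨t, by have := hd.succ_lt; omega⟩ ⟨t + 1, hd.succ_lt⟩ rfl hd hd'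
  · rintro ⟨hfinal, hdouble⟩
    refine ⟨fun p hp hd => hfinal p hp hd, fun p q hpq hd hd' => ?_⟩
    have hq : IsDescent w (p + 1) := hpq ▸ hd'
    exact hdouble p hd hq

/-- `insertMax w k` is `w` with the letter `m` (0-based, the largest) inserted at position `k`. -/
def insertMax (w : Equiv.Perm (Fin m)) (k : Fin (m + 1)) : Equiv.Perm (Fin (m + 1)) :=
  ((finSuccEquiv' k).trans (Equiv.optionCongr w)).trans (finSuccEquiv' (Fin.last m)).symm

section insertMax

variable (w : Equiv.Perm (Fin m)) (k : Fin (m + 1))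

@[simp]
lemma insertMax_self : insertMax w k k = Fin.last m := by
  simp [insertMax, finSuccEquiv'_at, finSuccEquiv'_symm_none]

@[simp]
lemma insertMax_succAbove (a : Fin m) : insertMax w k (k.succAbove a) = (w a).castSucc := by
  simp [insertMax, finSuccEquiv'_succAbove, finSuccEquiv'_symm_some, Fin.succAbove_last]

lemma insertMax_val_of_lt {t : ℕ} (htk : t < (k : ℕ)) (ht : t < m) :
    (insertMax w k ⟨t, by omega⟩ : ℕ) = w ⟨t, ht⟩ := by
  have : k.succAbove ⟨t, ht⟩ = ⟨t, by omega⟩ :=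
    Fin.succAbove_of_castSucc_lt _ _ (by simpa [Fin.lt_def] using htk)
  simp [← this]

lemma insertMax_val_succ_of_le {t : ℕ} (hkt : (k : ℕ) ≤ t) (ht : t < m) :
    (insertMax w k ⟨t + 1, by omega⟩ : ℕ) = w ⟨t, ht⟩ := by
  have : k.succAbove ⟨t, ht⟩ = ⟨t + 1, by omega⟩ :=
    Fin.succAbove_of_le_castSucc _ _ (by simpa [Fin.le_def] using hkt)
  simp [← this]

lemma insertMax_val_of_eq {t : ℕ} (htk : t = (k : ℕ)) :
    (insertMax w k ⟨t, by omega⟩ : ℕ) = m := by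
  subst htk
  simp

lemma isDescent_insertMax_of_succ_lt {t : ℕ} (h : t + 1 < (k : ℕ)) :
    IsDescent (insertMax w k) t ↔ IsDescent w t := by
  have := k.isLt
  constructor <;> rintro ⟨_, hlt⟩ <;> refine ⟨by omega, ?_⟩
  · rwa [insertMax_val_of_lt w k h (by omega), insertMax_val_of_lt w k (by omega) (by omega)]
      at hlt
  · rwa [insertMax_val_of_lt w k h (by omega), insertMax_val_of_lt w k (by omega) (by omega)]

lemma not_isDescent_insertMax_of_succ_eq {t : ℕ} (h : t + 1 = (k : ℕ)) :
    ¬ IsDescent (insertMax w k) t := by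
  rintro ⟨_, hlt⟩
  rw [insertMax_val_of_eq w k h, insertMax_val_of_lt w k (by omega) (by omega)] at hlt
  have := (w ⟨t, by omega⟩).isLt
  omega

lemma isDescent_insertMax_self (hk : (k : ℕ) < m) : IsDescent (insertMax w k) k := by
  refine ⟨by omega, ?_⟩
  rw [insertMax_val_of_eq w k rfl, insertMax_val_succ_of_le w k le_rfl hk]
  exact (w _).2

lemma isDescent_insertMax_succ_of_le {t : ℕ} (h : (k : ℕ) ≤ t) :
    IsDescent (insertMax w k) (t + 1) ↔ IsDescent w t := by
  have := k.isLt
  constructor <;> rintro ⟨_, hlt⟩ <;> refine ⟨by omega, ?_⟩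
  · rwa [insertMax_val_succ_of_le w k (by omega) (by omega),
      insertMax_val_succ_of_le w k h (by omega)] at hlt
  · rwa [insertMax_val_succ_of_le w k (by omega) (by omega),
      insertMax_val_succ_of_le w k h (by omega)]

lemma isDescent_insertMax_iff (t : ℕ) :
    IsDescent (insertMax w k) t ↔
      (t + 1 < (k : ℕ) ∧ IsDescent w t) ∨ (t = (k : ℕ) ∧ (k : ℕ) < m) ∨
        ((k : ℕ) < t ∧ IsDescent w (t - 1)) := by
  have := k.isLt
  rcases Nat.lt_trichotomy (t + 1) k with h | h | h
  · rw [isDescent_insertMax_of_succ_lt w k h]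
    simp [h, show t ≠ k by omega, show ¬ (k : ℕ) < t by omega]
  · simp [not_isDescent_insertMax_of_succ_eq w k h, show ¬ t + 1 < k by omega,
      show t ≠ k by omega, show ¬ (k : ℕ) < t by omega]
  · obtain rfl | h := (Nat.lt_succ_iff.mp h).eq_or_lt
    · simp only [lt_irrefl, false_and, true_and, false_or, or_false, add_lt_iff_neg_left,
        Nat.not_lt_zero]
      exact ⟨fun hd => by have := hd.succ_lt; omega, isDescent_insertMax_self w k⟩
    · obtain ⟨s, rfl⟩ : ∃ s, t = s + 1 := ⟨t - 1, by omega⟩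
      rw [isDescent_insertMax_succ_of_le w k (by omega), Nat.add_sub_cancel]
      simp [h, show ¬ s + 1 + 1 < k by omega, show s + 1 ≠ k by omega]

end insertMax

lemma insertMax_injective₂ {w w' : Equiv.Perm (Fin m)} {k k' : Fin (m + 1)}
    (h : insertMax w k = insertMax w' k') : w = w' ∧ k = k' := by
  obtain rfl : k = k' := (insertMax w' k').injective <| by
    rw [insertMax_self, ← insertMax_self w k, h]
  refine ⟨Equiv.ext fun a => Fin.castSucc_injective _ ?_, rfl⟩
  rw [← insertMax_succAbove, ← insertMax_succAbove, h]

noncomputable def slots (w : Equiv.Perm (Fin m)) : Finset (Fin (m + 1)) :=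
  insert (Fin.last m) (({p : Fin m | IsDescent w p} : Finset _).image Fin.succ)

lemma mem_slots {w : Equiv.Perm (Fin m)} {k : Fin (m + 1)} :
    k ∈ slots w ↔ (k : ℕ) = m ∨ (0 < (k : ℕ) ∧ IsDescent w (k - 1)) := by
  simp only [slots, mem_insert, mem_image, mem_filter, mem_univ, true_and, Fin.ext_iff,
    Fin.val_last, Fin.val_succ]
  refine or_congr Iff.rfl ⟨fun ⟨p, hp, he⟩ => ?_, fun ⟨hk, hd⟩ => ?_⟩
  · rw [← he, Nat.add_sub_cancel]
    exact ⟨by omega, hp⟩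
  · exact ⟨⟨k - 1, by have := hd.succ_lt; omega⟩, hd, by simp only; omega⟩

lemma card_slots (w : Equiv.Perm (Fin m)) : #(slots w) = des w + 1 := by
  rw [slots, card_insert_of_notMem, card_image_of_injective _ (Fin.succ_injective m),
    des_eq_card_isDescent]
  simp only [mem_image, mem_filter, mem_univ, true_and, not_exists, not_and, Fin.ext_iff,
    Fin.val_succ, Fin.val_last]
  exact fun p hp => by have := hp.succ_lt; omega

lemma des_insertMax {w : Equiv.Perm (Fin m)} {k : Fin (m + 1)} (hk : k ∈ slots w) :
    des (insertMax w k) = des w := by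
  rw [des_eq_card_Iio, des_eq_card_Iio]
  symm
  refine card_nbij (fun t => if t + 1 < (k : ℕ) then t else t + 1) (fun t ht => ?_)
    (fun t _ s _ hts => ?_) (fun t ht => ?_)
  · simp only [coe_filter, mem_Iio, Set.mem_ofPred_eq, isDescent_insertMax_iff] at ht ⊢
    have := ht.2.succ_lt
    split_ifs with h
    · exact ⟨by omega, Or.inl ⟨h, ht.2⟩⟩
    · obtain hkt | hlt := (show (k : ℕ) ≤ t + 1 by omega).eq_or_lt
      · exact ⟨by omega, Or.inr (Or.inl ⟨hkt.symm, by omega⟩)⟩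
      · exact ⟨by omega, Or.inr (Or.inr ⟨hlt, ht.2⟩)⟩
  · dsimp only at hts
    split_ifs at hts <;> omega
  · simp only [coe_filter, mem_Iio, Set.mem_ofPred_eq, isDescent_insertMax_iff, Set.mem_image]
      at ht ⊢
    obtain ⟨-, ⟨hlt, hd⟩ | ⟨rfl, hkm⟩ | ⟨hlt, hd⟩⟩ := ht
    · exact ⟨t, ⟨by have := hd.succ_lt; omega, hd⟩, if_pos hlt⟩
    · obtain hk | ⟨hk0, hd⟩ := mem_slots.mp hk
      · omega
      · exact ⟨k - 1, ⟨by have := hd.succ_lt; omega, hd⟩, by rw [if_neg (by omega)]; omega⟩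
    · exact ⟨t - 1, ⟨by have := hd.succ_lt; omega, hd⟩, by rw [if_neg (by omega)]; omega⟩

lemma shatMem_insertMax {w : Equiv.Perm (Fin m)} {k : Fin (m + 1)} (hw : ShatMem w)
    (hk : k ∈ slots w) : ShatMem (insertMax w k) := by
  rw [shatMem_iff] at hw ⊢
  have hfinal : ∀ t, IsDescent w t → t + 2 ≠ m := fun t hd h => hw.1 t h hd
  have hdouble : ∀ s t, IsDescent w s → IsDescent w t → t ≠ s + 1 := by
    rintro s _ hs ht rfl
    exact hw.2 s hs ht
  have hslot : (k : ℕ) < m → 0 < (k : ℕ) ∧ IsDescent w (k - 1) := fun hkm =>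
    (mem_slots.mp hk).resolve_left hkm.ne
  have := k.isLt
  refine ⟨fun t ht hd => ?_, fun t hd hd' => ?_⟩
  · rcases (isDescent_insertMax_iff w k t).mp hd with ⟨h, -⟩ | ⟨h, hkm⟩ | ⟨h, hd⟩
    · omega
    · exact hfinal _ (hslot hkm).2 (by omega)
    · exact hfinal _ hd (by omega)
  · rcases (isDescent_insertMax_iff w k t).mp hd with ⟨h, hd⟩ | ⟨h, hkm⟩ | ⟨h, hd⟩ <;>
      rcases (isDescent_insertMax_iff w k (t + 1)).mp hd' with
        ⟨h', hd'⟩ | ⟨h', -⟩ | ⟨h', hd'⟩ <;>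
      first
      | omega
      | exact hdouble _ _ hd hd' (by omega)
      | exact hdouble _ _ (hslot hkm).2 hd' (by omega)

theorem succ_mul_card_le_card (i : ℕ) :
    (i + 1) * #{w : Equiv.Perm (Fin m) | ShatMem w ∧ des w = i} ≤
      #{w : Equiv.Perm (Fin (m + 1)) | ShatMem w ∧ des w = i} := by
  set S := ({w : Equiv.Perm (Fin m) | ShatMem w ∧ des w = i} : Finset _)
  calc (i + 1) * #S = ∑ w ∈ S, #(slots w) := by
        rw [sum_congr rfl fun w hw => by rw [card_slots, (mem_filter.mp hw).2.2], sum_const,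
          smul_eq_mul, mul_comm]
    _ = #(S.sigma slots) := (card_sigma _ _).symm
    _ ≤ _ := by
      refine card_le_card_of_injOn (fun x => insertMax x.1 x.2) (fun x hx => ?_)
        (fun x _ y _ hxy => ?_)
      · obtain ⟨hw, hk⟩ := mem_sigma.mp hx
        obtain ⟨hshat, hdes⟩ := (mem_filter.mp hw).2
        simp only [coe_filter, mem_univ, true_and, Set.mem_ofPred_eq]
        exact ⟨shatMem_insertMax hshat hk, (des_insertMax hk).trans hdes⟩
      · obtain ⟨hw, hk⟩ := insertMax_injective₂ hxy
        exact Sigma.ext hw (heq_of_eq hk)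

end Shat

theorem stmt13_general (n i : ℕ) (hn : 1 ≤ n) :
    (i + 1) *
        (Finset.univ.filter fun w : Equiv.Perm (Fin (n - 1)) =>
          ShatMem w ∧ des w = i).card ≤
      (Finset.univ.filter fun w : Equiv.Perm (Fin n) =>
        ShatMem w ∧ des w = i).card := by
  obtain ⟨m, rfl⟩ : ∃ m, n = m + 1 := ⟨n - 1, by omega⟩
  exact Shat.succ_mul_card_le_card i

theorem stmt13 (n i : ℕ) (hn : 1 ≤ n) (hi1 : 1 ≤ i) (hi2 : i ≤ n / 2 - 1) :
    (i + 1) *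
        (Finset.univ.filter fun w : Equiv.Perm (Fin (n - 1)) =>
          ShatMem w ∧ des w = i).card ≤
      (Finset.univ.filter fun w : Equiv.Perm (Fin n) =>
        ShatMem w ∧ des w = i).card :=
  stmt13_general n i hn
end

section
/- If γ = (γ_0,...,γ_m) is the f-vector of a simplicial complex and h_i = Σ_{j=0}^{i} γ_j · C(d-2j, i-j) for 0 ≤ i ≤ ⌊d/2⌋ with m = ⌊d/2⌋, then (h_0,...,h_{⌊d/2⌋}) extends to the f-vector of a simplicial complex; explicitly, the complex Δ = {F ∪ G : F ∈ F(γ), G ⊆ [d - 2|F|]} (where F(γ) is a complex with f-vector γ and [d-2|F|] is a disjoint simplex vertex set) satisfies f_i(Δ) = Σ_{j=0}^{i} γ_j C(d-2j, i-j). -/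
open scoped Classical

section Helpers
variable {α : Type*} [DecidableEq α]

private def e (F : Finset α) (G : Finset ℕ) : Finset (α ⊕ ℕ) :=
  F.image Sum.inl ∪ G.image Sum.inr

private lemma mem_e_inl {F : Finset α} {G : Finset ℕ} {a : α} :
    Sum.inl a ∈ e F G ↔ a ∈ F := by simp [e]

private lemma mem_e_inr {F : Finset α} {G : Finset ℕ} {n : ℕ} :
    Sum.inr n ∈ e F G ↔ n ∈ G := by simp [e]

private lemma e_inj {F F' : Finset α} {G G' : Finset ℕ} (h : e F G = e F' G') :
    F = F' ∧ G = G' := by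
  constructor
  · ext a; rw [← mem_e_inl (G := G), h, mem_e_inl]
  · ext n; rw [← mem_e_inr (F := F), h, mem_e_inr]

private lemma card_e (F : Finset α) (G : Finset ℕ) : (e F G).card = F.card + G.card := by
  rw [e, Finset.card_union_of_disjoint, Finset.card_image_of_injective _ Sum.inl_injective,
    Finset.card_image_of_injective _ Sum.inr_injective]
  simp [Finset.disjoint_left]

end Helpers

/-- If `γ` is the `f`-vector of a simplicial complex `K` (with faces of at most
`⌊d/2⌋` vertices), then the complex
`Δ = {F ∪ G : F ∈ K, G ⊆ {1,…,d-2|F|}}` (new vertices disjoint from those of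
`K`) is a simplicial complex with `f_i(Δ) = Σ_{j=0}^{i} γ_j · C(d-2j, i-j)`. -/
theorem stmt17 {α : Type*} [DecidableEq α] (d : ℕ) (K : Finset (Finset α)) (γ : ℕ → ℕ)
    (hdc : ∀ s ∈ K, ∀ t ⊆ s, t ∈ K)
    (hcard : ∀ s ∈ K, 2 * s.card ≤ d)
    (hγ : ∀ j, γ j = (K.filter fun s => s.card = j).card) :
    ∀ Δ : Finset (Finset (α ⊕ ℕ)),
      Δ = (K.biUnion fun F =>
        ((Finset.Icc 1 (d - 2 * F.card)).powerset).image fun G =>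
          F.image Sum.inl ∪ G.image Sum.inr) →
      (∀ s ∈ Δ, ∀ t ⊆ s, t ∈ Δ) ∧
      ∀ i, ((Δ.filter fun s => s.card = i).card) =
        ∑ j ∈ Finset.range (i + 1), γ j * (d - 2 * j).choose (i - j) := by
  intro Δ hΔ
  have memΔ : ∀ s : Finset (α ⊕ ℕ), s ∈ Δ ↔
      ∃ F ∈ K, ∃ G ⊆ Finset.Icc 1 (d - 2 * F.card), s = e F G := by
    intro s
    simp only [hΔ, Finset.mem_biUnion, Finset.mem_image, Finset.mem_powerset, e]
    constructor
    · rintro ⟨F, hF, G, hG, rfl⟩; exact ⟨F, hF, G, hG, rfl⟩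
    · rintro ⟨F, hF, G, hG, rfl⟩; exact ⟨F, hF, G, hG, rfl⟩
  constructor
  · intro s hs t hts
    rw [memΔ] at hs ⊢
    obtain ⟨F, hF, G, hG, rfl⟩ := hs
    refine ⟨F.filter (fun a => Sum.inl a ∈ t), hdc _ hF _ (Finset.filter_subset _ _),
      G.filter (fun n => Sum.inr n ∈ t), ?_, ?_⟩
    · refine subset_trans (subset_trans (Finset.filter_subset _ _) hG) ?_
      exact Finset.Icc_subset_Icc_right
        (Nat.sub_le_sub_left (Nat.mul_le_mul_left 2
          (Finset.card_le_card (Finset.filter_subset _ _))) d)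
    · ext x
      constructor
      · intro hx
        have hxs := hts hx
        rcases x with a | n
        · rw [mem_e_inl] at hxs ⊢; exact Finset.mem_filter.2 ⟨hxs, hx⟩
        · rw [mem_e_inr] at hxs ⊢; exact Finset.mem_filter.2 ⟨hxs, hx⟩
      · intro hx
        rcases x with a | n
        · rw [mem_e_inl] at hx; exact (Finset.mem_filter.1 hx).2
        · rw [mem_e_inr] at hx; exact (Finset.mem_filter.1 hx).2
  · intro i
    -- rewrite Δ as biUnion of images of e
    have hΔ' : Δ = K.biUnion fun F =>
        ((Finset.Icc 1 (d - 2 * F.card)).powerset).image (e F) := hΔ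
    have hdisj : (K : Set (Finset α)).PairwiseDisjoint
        (fun F => (((Finset.Icc 1 (d - 2 * F.card)).powerset).image (e F)).filter
          (fun s => s.card = i)) := by
      intro F hF F' hF' hne
      simp only [Finset.disjoint_left]
      intro s hs hs'
      simp only [Finset.mem_filter, Finset.mem_image] at hs hs'
      obtain ⟨⟨G, _, rfl⟩, _⟩ := hs
      obtain ⟨⟨G', _, hGG⟩, _⟩ := hs'
      exact hne (e_inj hGG).1.symm
    have key : (Δ.filter fun s => s.card = i).card =
        ∑ F ∈ K, ((((Finset.Icc 1 (d - 2 * F.card)).powerset).image (e F)).filter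
          (fun s => s.card = i)).card := by
      rw [hΔ', Finset.filter_biUnion, Finset.card_biUnion]
      intro F hF F' hF' hne
      exact hdisj hF hF' hne
    rw [key]
    have term_eq : ∀ F ∈ K,
        ((((Finset.Icc 1 (d - 2 * F.card)).powerset).image (e F)).filter
          (fun s => s.card = i)).card =
        if F.card ≤ i then (d - 2 * F.card).choose (i - F.card) else 0 := by
      intro F hF
      rw [Finset.filter_image]
      rw [Finset.card_image_of_injOn (fun G _ G' _ h => (e_inj h).2)]
      have : ((Finset.Icc 1 (d - 2 * F.card)).powerset).filter
          (fun G => (e F G).card = i) =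
          ((Finset.Icc 1 (d - 2 * F.card)).powerset).filter
          (fun G => F.card ≤ i ∧ G.card = i - F.card) := by
        apply Finset.filter_congr
        intro G _
        rw [card_e]
        constructor
        · rintro rfl; exact ⟨Nat.le_add_right _ _, by omega⟩
        · rintro ⟨h1, h2⟩; omega
      rw [this]
      by_cases hle : F.card ≤ i
      · rw [if_pos hle]
        have h2 : ((Finset.Icc 1 (d - 2 * F.card)).powerset).filter
            (fun G => F.card ≤ i ∧ G.card = i - F.card) =
            (Finset.Icc 1 (d - 2 * F.card)).powersetCard (i - F.card) := by
          rw [Finset.powersetCard_eq_filter]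
          apply Finset.filter_congr
          intro G _
          simp [hle]
        rw [h2, Finset.card_powersetCard, Nat.card_Icc]
        simp
      · rw [if_neg hle]
        rw [Finset.card_eq_zero, Finset.filter_eq_empty_iff]
        intro G _
        simp [hle]
    rw [Finset.sum_congr rfl term_eq]
    -- fiberwise sum over cardinalities
    set N := i + d + 2 with hN
    have hmaps : ∀ F ∈ K, F.card ∈ Finset.range N := by
      intro F hF
      have := hcard F hF
      simp only [Finset.mem_range, hN]
      omega
    have hfib := Finset.sum_fiberwise_of_maps_to hmaps
      (fun F : Finset α => if F.card ≤ i then (d - 2 * F.card).choose (i - F.card) else 0)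
    rw [← hfib]
    have inner : ∀ j ∈ Finset.range N,
        (∑ F ∈ K.filter (fun F => F.card = j),
          if F.card ≤ i then (d - 2 * F.card).choose (i - F.card) else 0) =
        (if j ≤ i then γ j * (d - 2 * j).choose (i - j) else 0) := by
      intro j _
      have : ∀ F ∈ K.filter (fun F => F.card = j),
          (if F.card ≤ i then (d - 2 * F.card).choose (i - F.card) else 0) =
          (if j ≤ i then (d - 2 * j).choose (i - j) else 0) := by
        intro F hF
        have := (Finset.mem_filter.1 hF).2
        subst this
        rfl
      rw [Finset.sum_congr rfl this, Finset.sum_const, smul_eq_mul, ← hγ j]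
      by_cases hji : j ≤ i <;> simp [hji, mul_comm]
    rw [Finset.sum_congr rfl inner]
    rw [← Finset.sum_subset (s₁ := Finset.range (i+1)) (s₂ := Finset.range N)
      (by intro x hx; simp only [Finset.mem_range] at *; omega)
      (by intro x _ hx; simp only [Finset.mem_range] at hx
          have : ¬ x ≤ i := by omega
          simp [this])]
    apply Finset.sum_congr rfl
    intro j hj
    simp only [Finset.mem_range] at hj
    have : j ≤ i := by omega
    simp [this]
end

section
/- Let Δ be a d-colorable simplicial complex on vertex set V with proper coloring c: V → {1,...,d} and f-vector γ. For F ∈ Δ, let d(F) be the set of the first |F| integers in {1,...,d} \ c(F). Then Γ = {F ∪ G : F ∈ Δ, G ⊆ {1,...,d} \ (c(F) ∪ d(F))} is a d-colorable simplicial complex with f_i(Γ) = Σ_{j=0}^{i} γ_j · C(d-2j, i-j). -/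
/-!
A face of `Γ` is `F.disjSum G`, and it lies in `Γ` exactly when `F ∈ K` and
`G ⊆ A F := [d] \ (c(F) ∪ d(F))`. Closure under subsets therefore reduces to `A` being
antitone: for `F' ⊆ F`, a color of `d(F')` outside `c(F)` is free for `F` and has fewer
than `|F'| ≤ |F|` free colors of `F` below it, so it lies in `d(F)`. Since `|A F| = d - 2|F|`,
the faces of size `i` with left part `F` number `C(d - 2|F|, i - |F|)`, and grouping the `F` by
size gives the formula.
-/

open Finset

theorem List.mem_take_iff_countP_lt {α : Type*} [LinearOrder α] {l : List α}
    (hl : l.Pairwise (· < ·)) {n : ℕ} {x : α} :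
    x ∈ l.take n ↔ x ∈ l ∧ l.countP (· < x) < n := by
  induction l generalizing n with
  | nil => simp
  | cons a l ih =>
    rw [List.pairwise_cons] at hl
    cases n with
    | zero => simp
    | succ n =>
      rw [List.take_succ_cons, List.mem_cons, List.mem_cons, ih hl.2, List.countP_cons]
      rcases eq_or_ne x a with rfl | hxa
      · have : l.countP (· < x) = 0 := List.countP_eq_zero.2 fun y hy => by
          simpa using (hl.1 y hy).le
        simp [this]
      · by_cases hx : x ∈ l
        · simp [hxa, hx, hl.1 x hx]
        · simp [hxa, hx]

namespace Finset

section Smallest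

variable {α : Type*} [LinearOrder α] {s t : Finset α} {k l : ℕ} {x : α}

def smallest (s : Finset α) (k : ℕ) : Finset α :=
  ((s.sort (· ≤ ·)).take k).toFinset

theorem mem_smallest : x ∈ s.smallest k ↔ x ∈ s ∧ #{y ∈ s | y < x} < k := by
  have hcount : (s.sort (· ≤ ·)).countP (· < x) = #{y ∈ s | y < x} := by
    rw [← Multiset.coe_countP, sort_eq, Multiset.countP_eq_card_filter]
    rfl
  rw [smallest, List.mem_toFinset, List.mem_take_iff_countP_lt s.sortedLT_sort.pairwise,
    mem_sort, hcount]

theorem smallest_subset : s.smallest k ⊆ s := fun _ hx => (mem_smallest.1 hx).1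

theorem card_smallest : #(s.smallest k) = min k #s := by
  rw [smallest, List.toFinset_card_of_nodup ((s.sort_nodup _).sublist (List.take_sublist _ _)),
    List.length_take, length_sort]

theorem smallest_inter_subset (hst : s ⊆ t) (hkl : k ≤ l) :
    t.smallest k ∩ s ⊆ s.smallest l := by
  intro x hx
  obtain ⟨hxt, hxs⟩ := mem_inter.1 hx
  refine mem_smallest.2 ⟨hxs, lt_of_le_of_lt ?_ ((mem_smallest.1 hxt).2.trans_le hkl)⟩
  exact card_le_card (filter_subset_filter _ hst)

end Smallest

section DisjSumFamily

variable {α β : Type*} [DecidableEq α] [DecidableEq β] {K : Finset (Finset α)}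
  {A : Finset α → Finset β} {s : Finset (α ⊕ β)}

theorem image_inl_union_image_inr (s : Finset α) (t : Finset β) :
    s.image Sum.inl ∪ t.image Sum.inr = s.disjSum t := by
  ext (x | x) <;> simp

theorem mem_biUnion_image_disjSum :
    s ∈ K.biUnion (fun F => (A F).powerset.image F.disjSum) ↔
      s.toLeft ∈ K ∧ s.toRight ⊆ A s.toLeft := by
  simp only [mem_biUnion, mem_image, mem_powerset]
  constructor
  · rintro ⟨F, hF, G, hG, rfl⟩
    simpa using ⟨hF, hG⟩
  · rintro ⟨hK, hA⟩
    exact ⟨_, hK, _, hA, toLeft_disjSum_toRight⟩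

theorem subset_mem_biUnion_image_disjSum (hK : ∀ F ∈ K, ∀ F' ⊆ F, F' ∈ K)
    (hA : ∀ F ∈ K, ∀ F' ⊆ F, A F ⊆ A F') {t : Finset (α ⊕ β)}
    (hs : s ∈ K.biUnion (fun F => (A F).powerset.image F.disjSum)) (hts : t ⊆ s) :
    t ∈ K.biUnion (fun F => (A F).powerset.image F.disjSum) := by
  rw [mem_biUnion_image_disjSum] at hs ⊢
  have hleft : t.toLeft ⊆ s.toLeft := toLeft_subset_toLeft hts
  exact ⟨hK _ hs.1 _ hleft,
    (toRight_subset_toRight hts).trans (hs.2.trans (hA _ hs.1 _ hleft))⟩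

theorem card_filter_card_eq_biUnion_image_disjSum (i : ℕ) :
    #{s ∈ K.biUnion (fun F => (A F).powerset.image F.disjSum) | #s = i} =
      ∑ F ∈ K with #F ≤ i, (#(A F)).choose (i - #F) := by
  have hfilter : {s ∈ K.biUnion (fun F => (A F).powerset.image F.disjSum) | #s = i} =
      {F ∈ K | #F ≤ i}.biUnion fun F => ((A F).powersetCard (i - #F)).image F.disjSum := by
    ext s
    rw [mem_filter, mem_biUnion_image_disjSum]
    simp only [mem_filter, mem_biUnion, mem_image, mem_powersetCard]
    constructor
    · rintro ⟨⟨hK, hA⟩, rfl⟩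
      refine ⟨s.toLeft, ⟨hK, card_toLeft_le⟩, s.toRight, ⟨hA, ?_⟩,
        toLeft_disjSum_toRight⟩
      rw [← card_toLeft_add_card_toRight]; omega
    · rintro ⟨F, ⟨hK, hFi⟩, G, ⟨hA, hG⟩, rfl⟩
      rw [toLeft_disjSum, toRight_disjSum, card_disjSum]
      exact ⟨⟨hK, hA⟩, by omega⟩
  rw [hfilter, card_biUnion]
  · refine sum_congr rfl fun F _ => ?_
    rw [card_image_of_injective _ (Injective2_disjSum.right F), card_powersetCard]
  · intro F₁ _ F₂ _ hne
    refine disjoint_left.2 fun s hs₁ hs₂ => hne ?_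
    obtain ⟨G₁, _, rfl⟩ := mem_image.1 hs₁
    obtain ⟨G₂, _, h⟩ := mem_image.1 hs₂
    simpa using (congrArg toLeft h).symm

end DisjSumFamily

theorem sum_filter_card_le_eq_sum_range {α M : Type*} [AddCommMonoid M] (K : Finset (Finset α))
    (g : ℕ → M) (i : ℕ) :
    ∑ F ∈ K with #F ≤ i, g #F = ∑ j ∈ range (i + 1), #{F ∈ K | #F = j} • g j := by
  simp_rw [← Nat.lt_succ_iff, ← mem_range]
  rw [← sum_fiberwise_eq_sum_filter K (range (i + 1)) card]
  refine sum_congr rfl fun j _ => ?_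
  rw [sum_congr rfl fun F hF => by rw [(mem_filter.1 hF).2], sum_const]

end Finset

theorem Set.injOn_sumElim_id {α β : Type*} {c : α → β} {s : Finset (α ⊕ β)}
    (hc : Set.InjOn c s.toLeft) (hdisj : ∀ a ∈ s.toLeft, c a ∉ s.toRight) :
    Set.InjOn (Sum.elim c id) s := by
  rintro (a | a) ha (b | b) hb hab
  · exact congrArg Sum.inl (hc (Finset.mem_toLeft.2 ha) (Finset.mem_toLeft.2 hb) hab)
  · simp only [Sum.elim_inl, Sum.elim_inr, id] at hab
    exact absurd (Finset.mem_toRight.2 hb) (hab ▸ hdisj a (Finset.mem_toLeft.2 ha))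
  · simp only [Sum.elim_inl, Sum.elim_inr, id] at hab
    exact absurd (Finset.mem_toRight.2 ha) (hab ▸ hdisj b (Finset.mem_toLeft.2 hb))
  · exact congrArg Sum.inr hab

section FreeColors

variable {α κ : Type*} [LinearOrder κ] (C : Finset κ) (c : α → κ) {F F' : Finset α}

/-- The paper's `d(F)`. -/
def firstFreeColors (F : Finset α) : Finset κ := (C \ F.image c).smallest #F

variable {C c}

theorem image_union_firstFreeColors_subset (h : F' ⊆ F) :
    F'.image c ∪ firstFreeColors C c F' ⊆ F.image c ∪ firstFreeColors C c F := by
  have himage : F'.image c ⊆ F.image c := image_subset_image h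
  refine union_subset (himage.trans subset_union_left) fun x hx => ?_
  by_cases hxF : x ∈ F.image c
  · exact mem_union_left _ hxF
  · have hxC : x ∈ C := (mem_sdiff.1 (smallest_subset hx)).1
    exact mem_union_right _ (smallest_inter_subset (sdiff_subset_sdiff subset_rfl himage)
      (card_le_card h) (mem_inter.2 ⟨hx, mem_sdiff.2 ⟨hxC, hxF⟩⟩))

theorem card_sdiff_image_union_firstFreeColors (hc : F.image c ⊆ C) (hinj : Set.InjOn c F) :
    #(C \ (F.image c ∪ firstFreeColors C c F)) = #C - 2 * #F := by
  have hsplit : C \ (F.image c ∪ firstFreeColors C c F) =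
      (C \ F.image c) \ firstFreeColors C c F := sdiff_sdiff_left.symm
  rw [hsplit, firstFreeColors, card_sdiff_of_subset smallest_subset, card_smallest,
    card_sdiff_of_subset hc, card_image_of_injOn hinj]
  omega

end FreeColors

theorem stmt19_general {α : Type*} [DecidableEq α] (d : ℕ) (K : Finset (Finset α))
    (c : α → ℕ) (γ : ℕ → ℕ)
    (hc : ∀ v : α, c v ∈ Finset.Icc 1 d)
    (hproper : ∀ F ∈ K, ∀ a ∈ F, ∀ b ∈ F, c a = c b → a = b)
    (hdc : ∀ s ∈ K, ∀ t ⊆ s, t ∈ K)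
    (hγ : ∀ j, γ j = (K.filter fun s => s.card = j).card) :
    ∀ dF : Finset α → Finset ℕ,
      (dF = fun F => (((Finset.Icc 1 d \ F.image c).sort (· ≤ ·)).take F.card).toFinset) →
    ∀ Γ : Finset (Finset (α ⊕ ℕ)),
      Γ = (K.biUnion fun F =>
        ((Finset.Icc 1 d \ (F.image c ∪ dF F)).powerset).image fun G =>
          F.image Sum.inl ∪ G.image Sum.inr) →
      (∀ s ∈ Γ, ∀ t ⊆ s, t ∈ Γ) ∧
      (∀ s ∈ Γ, ∀ x ∈ s, Sum.elim c id x ∈ Finset.Icc 1 d) ∧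
      (∀ s ∈ Γ, ∀ a ∈ s, ∀ b ∈ s, Sum.elim c id a = Sum.elim c id b → a = b) ∧
      ∀ i, ((Γ.filter fun s => s.card = i).card) =
        ∑ j ∈ Finset.range (i + 1), γ j * (d - 2 * j).choose (i - j) := by
  intro dF hdF Γ hΓ
  obtain rfl : Γ = K.biUnion fun F =>
      (Icc 1 d \ (F.image c ∪ firstFreeColors (Icc 1 d) c F)).powerset.image F.disjSum := by
    simp only [hΓ, hdF, image_inl_union_image_inr]
    rfl
  set A := fun F => Icc 1 d \ (F.image c ∪ firstFreeColors (Icc 1 d) c F)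
  have hmem : ∀ s ∈ K.biUnion fun F => (A F).powerset.image F.disjSum,
      s.toLeft ∈ K ∧ s.toRight ⊆ A s.toLeft := fun _ hs => mem_biUnion_image_disjSum.1 hs
  have hA_anti : ∀ F ∈ K, ∀ F' ⊆ F, A F ⊆ A F' := fun _ _ _ hF' =>
    sdiff_subset_sdiff subset_rfl (image_union_firstFreeColors_subset hF')
  refine ⟨fun s hs t hts => subset_mem_biUnion_image_disjSum hdc hA_anti hs hts, ?_, ?_,
    fun i => ?_⟩
  · rintro s hs (a | n) hx
    · exact hc a
    · exact (mem_sdiff.1 ((hmem s hs).2 (mem_toRight.2 hx))).1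
  · intro s hs a ha b hb hab
    refine Set.injOn_sumElim_id (fun a ha b hb => hproper _ (hmem s hs).1 a ha b hb)
      (fun a ha hac => ?_) ha hb hab
    exact (mem_sdiff.1 ((hmem s hs).2 hac)).2 (mem_union_left _ (mem_image_of_mem c ha))
  · have hcardA : ∀ F ∈ K, #(A F) = d - 2 * #F := fun F hF => by
      rw [card_sdiff_image_union_firstFreeColors (image_subset_iff.2 fun v _ => hc v)
        (fun a ha b hb => hproper F hF a ha b hb), Nat.card_Icc, Nat.add_sub_cancel]
    rw [card_filter_card_eq_biUnion_image_disjSum,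
      sum_congr rfl fun F hF => by rw [hcardA F (mem_filter.1 hF).1],
      sum_filter_card_le_eq_sum_range K (fun j => (d - 2 * j).choose (i - j))]
    simp only [hγ, smul_eq_mul]

/-- Let `K` be a `d`-colorable simplicial complex on vertices `α` with proper
coloring `c : α → {1,…,d}` and `f`-vector `γ` (faces of at most `⌊d/2⌋`
vertices). For `F ∈ K`, `dF F` is the set of the first `|F|` integers of
`{1,…,d} \ c(F)`. Then `Γ = {F ∪ G : F ∈ K, G ⊆ {1,…,d} \ (c(F) ∪ dF F)}`
(new vertices `{1,…,d}` colored by themselves, tagged disjointly from `α`)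
is a simplicial complex, properly colored by `Sum.elim c id` with colors in
`{1,…,d}`, and `f_i(Γ) = Σ_{j=0}^{i} γ_j · C(d-2j, i-j)`. -/
theorem stmt19 {α : Type*} [DecidableEq α] (d : ℕ) (K : Finset (Finset α))
    (c : α → ℕ) (γ : ℕ → ℕ)
    (hc : ∀ v : α, c v ∈ Finset.Icc 1 d)
    (hproper : ∀ F ∈ K, ∀ a ∈ F, ∀ b ∈ F, c a = c b → a = b)
    (hdc : ∀ s ∈ K, ∀ t ⊆ s, t ∈ K)
    (hcard : ∀ s ∈ K, 2 * s.card ≤ d)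
    (hγ : ∀ j, γ j = (K.filter fun s => s.card = j).card) :
    ∀ dF : Finset α → Finset ℕ,
      (dF = fun F => (((Finset.Icc 1 d \ F.image c).sort (· ≤ ·)).take F.card).toFinset) →
    ∀ Γ : Finset (Finset (α ⊕ ℕ)),
      Γ = (K.biUnion fun F =>
        ((Finset.Icc 1 d \ (F.image c ∪ dF F)).powerset).image fun G =>
          F.image Sum.inl ∪ G.image Sum.inr) →
      (∀ s ∈ Γ, ∀ t ⊆ s, t ∈ Γ) ∧
      (∀ s ∈ Γ, ∀ x ∈ s, Sum.elim c id x ∈ Finset.Icc 1 d) ∧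
      (∀ s ∈ Γ, ∀ a ∈ s, ∀ b ∈ s, Sum.elim c id a = Sum.elim c id b → a = b) ∧
      ∀ i, ((Γ.filter fun s => s.card = i).card) =
        ∑ j ∈ Finset.range (i + 1), γ j * (d - 2 * j).choose (i - j) :=
  stmt19_general d K c γ hc hproper hdc hγ
end
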